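/- arXiv:1405.2239 — 6 statements merged into one kernel-verified Lean document; each statement's English description precedes it below -/
import Mathlib

section
/- Let X be a nonnegative heavy-tailed random variable and let h be a natural scale of X, i.e., h : [0,∞) → [0,∞) is concave, increasing, h(0)=0, h(x) → ∞, and sup{s ≥ 0 : E[exp(s·h(X))] < ∞} = 1. Then the map c ↦ sup{s ≥ 0 : E[exp(s·h(c·X))] < ∞} is continuous at c = 1 (with value 1 there). -/
open Set MeasureTheory Real Filter

/-- If `h` is a natural scale of a nonnegative heavy-tailed random variable `X`,
then the map `c ↦ sup {s ≥ 0 : E[exp (s * h (c * X))] < ∞}` is continuous at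
`c = 1`, with value `1` there. -/
theorem natural_scale_index_continuous_at_one
    {Ω : Type*} [MeasurableSpace Ω] (μ : Measure Ω) [IsProbabilityMeasure μ]
    (X : Ω → ℝ) (hX : Measurable X) (hXnonneg : ∀ ω, 0 ≤ X ω)
    (hheavy : ∀ s : ℝ, 0 < s → ¬ Integrable (fun ω => Real.exp (s * X ω)) μ)
    (h : ℝ → ℝ)
    (hconc : ConcaveOn ℝ (Ici (0 : ℝ)) h)
    (hmono : MonotoneOn h (Ici (0 : ℝ)))
    (hnonneg : ∀ x ∈ Ici (0 : ℝ), 0 ≤ h x)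
    (h0 : h 0 = 0)
    (htop : Tendsto h atTop atTop)
    (hfin : ∀ s : ℝ, 0 ≤ s → s < 1 → Integrable (fun ω => Real.exp (s * h (X ω))) μ)
    (hinf : ∀ s : ℝ, 1 < s → ¬ Integrable (fun ω => Real.exp (s * h (X ω))) μ) :
    ContinuousAt
      (fun c : ℝ =>
        sSup {s : ℝ | 0 ≤ s ∧ Integrable (fun ω => Real.exp (s * h (c * X ω))) μ}) 1
    ∧ sSup {s : ℝ | 0 ≤ s ∧ Integrable (fun ω => Real.exp (s * h (X ω))) μ} = 1 := by
  classical
  set S : ℝ → Set ℝ :=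
    fun c => {s : ℝ | 0 ≤ s ∧ Integrable (fun ω => Real.exp (s * h (c * X ω))) μ} with hS
  -- measurability helper
  set G : ℝ → ℝ := fun x => h (max x 0) with hG
  have hGmono : Monotone G := by
    intro a b hab
    exact hmono (le_max_right a 0) (le_max_right b 0) (max_le_max hab le_rfl)
  have hGm : Measurable G := hGmono.measurable
  have meas : ∀ (c s : ℝ), 0 ≤ c → Measurable (fun ω => s * h (c * X ω)) := by
    intro c s hc
    have heq : (fun ω => s * h (c * X ω)) = fun ω => s * G (c * X ω) := by
      funext ω
      simp [hG, max_eq_left (mul_nonneg hc (hXnonneg ω))]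
    rw [heq]
    exact (hGm.comp (hX.const_mul c)).const_mul s
  have meas1 : ∀ s : ℝ, Measurable (fun ω => s * h (X ω)) := by
    intro s
    simpa using meas 1 s zero_le_one
  -- integrability transfer
  have trans : ∀ (f g : Ω → ℝ), Measurable f → (∀ ω, f ω ≤ g ω) →
      Integrable (fun ω => Real.exp (g ω)) μ → Integrable (fun ω => Real.exp (f ω)) μ := by
    intro f g hf hle hint
    refine hint.mono (Real.measurable_exp.comp hf).aestronglyMeasurable ?_
    filter_upwards with ω
    rw [Real.norm_eq_abs, Real.norm_eq_abs, abs_of_pos (Real.exp_pos _),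
      abs_of_pos (Real.exp_pos _)]
    exact Real.exp_le_exp.2 (hle ω)
  -- concavity scaling lemma
  have hscale : ∀ c x : ℝ, 1 ≤ c → 0 ≤ x → h (c * x) ≤ c * h x := by
    intro c x hc hx
    have hc0 : 0 < c := lt_of_lt_of_le one_pos hc
    have key := hconc.2 (mem_Ici.2 (mul_nonneg hc0.le hx)) (mem_Ici.2 le_rfl)
      (show (0:ℝ) ≤ 1/c by positivity)
      (show (0:ℝ) ≤ 1 - 1/c by
        have : 1/c ≤ 1 := by
          rw [div_le_one hc0]; exact hc
        linarith)
      (by ring)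
    simp only [smul_eq_mul, mul_zero, h0, add_zero] at key
    have hxx : (1/c) * (c * x) = x := by field_simp
    rw [hxx] at key
    have := mul_le_mul_of_nonneg_left key hc0.le
    calc h (c * x) = c * (1/c * h (c*x)) := by field_simp
    _ ≤ c * h x := this
  -- 0 ∈ S c
  have hzero : ∀ c : ℝ, (0:ℝ) ∈ S c := by
    intro c
    refine ⟨le_rfl, ?_⟩
    simp only [zero_mul, Real.exp_zero]
    exact integrable_const 1
  -- upper bound for c ≥ 1 : S c ⊆ Icc 0 1
  have hub1 : ∀ c : ℝ, 1 ≤ c → ∀ s ∈ S c, s ≤ 1 := by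
    intro c hc s hs
    by_contra hcon
    push_neg at hcon
    refine hinf s hcon ?_
    refine trans _ _ (meas1 s) (fun ω => ?_) hs.2
    have hle : X ω ≤ c * X ω := le_mul_of_one_le_left (hXnonneg ω) hc
    exact mul_le_mul_of_nonneg_left
      (hmono (hXnonneg ω) (mul_nonneg (le_trans zero_le_one hc) (hXnonneg ω)) hle) hs.1
  -- upper bound for 0 < c ≤ 1 : S c ⊆ Icc 0 (1/c)
  have hub2 : ∀ c : ℝ, 0 < c → c ≤ 1 → ∀ s ∈ S c, s ≤ 1/c := by
    intro c hc hc1 s hs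
    by_contra hcon
    push_neg at hcon
    have hsc : 1 < s * c := (div_lt_iff₀ hc).1 hcon
    refine hinf (s * c) hsc ?_
    refine trans _ _ (meas1 (s*c)) (fun ω => ?_) hs.2
    -- (s*c) * h (X ω) ≤ s * h (c * X ω)
    have h1 : h ((1/c) * (c * X ω)) ≤ (1/c) * h (c * X ω) :=
      hscale (1/c) (c * X ω) (by rw [le_div_iff₀ hc]; linarith) (mul_nonneg hc.le (hXnonneg ω))
    have hxx : (1/c) * (c * X ω) = X ω := by field_simp
    rw [hxx] at h1
    have h2 : c * h (X ω) ≤ h (c * X ω) := by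
      have := mul_le_mul_of_nonneg_left h1 hc.le
      calc c * h (X ω) ≤ c * ((1/c) * h (c * X ω)) := this
        _ = h (c * X ω) := by field_simp
    calc (s * c) * h (X ω) = s * (c * h (X ω)) := by ring
      _ ≤ s * h (c * X ω) := mul_le_mul_of_nonneg_left h2 hs.1
  -- lower inclusion for c ≥ 1 : Ico 0 (1/c) ⊆ S c
  have hlo1 : ∀ c : ℝ, 1 ≤ c → Ico (0:ℝ) (1/c) ⊆ S c := by
    intro c hc s hs
    have hc0 : 0 < c := lt_of_lt_of_le one_pos hc
    refine ⟨hs.1, ?_⟩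
    have hsc1 : s * c < 1 := by
      have := (lt_div_iff₀ hc0).1 hs.2
      linarith
    refine trans _ _ (meas c s hc0.le) (fun ω => ?_) (hfin (s*c) (mul_nonneg hs.1 hc0.le) hsc1)
    calc s * h (c * X ω) ≤ s * (c * h (X ω)) :=
          mul_le_mul_of_nonneg_left (hscale c (X ω) hc (hXnonneg ω)) hs.1
      _ = (s * c) * h (X ω) := by ring
  -- lower inclusion for 0 < c ≤ 1 : Ico 0 1 ⊆ S c
  have hlo2 : ∀ c : ℝ, 0 < c → c ≤ 1 → Ico (0:ℝ) 1 ⊆ S c := by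
    intro c hc hc1 s hs
    refine ⟨hs.1, ?_⟩
    refine trans _ _ (meas c s hc.le) (fun ω => ?_) (hfin s hs.1 hs.2)
    have hle : c * X ω ≤ X ω := mul_le_of_le_one_left (hXnonneg ω) hc1
    exact mul_le_mul_of_nonneg_left
      (hmono (mul_nonneg hc.le (hXnonneg ω)) (hXnonneg ω) hle) hs.1
  -- combined bounds
  have key : ∀ c : ℝ, 0 < c → min (1/c) 1 ≤ sSup (S c) ∧ sSup (S c) ≤ max (1/c) 1 := by
    intro c hc
    have hub : ∀ s ∈ S c, s ≤ max (1/c) 1 := by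
      intro s hs
      rcases le_total 1 c with h1 | h1
      · exact le_trans (hub1 c h1 s hs) (le_max_right _ _)
      · exact le_trans (hub2 c hc h1 s hs) (le_max_left _ _)
    have hbdd : BddAbove (S c) := ⟨max (1/c) 1, hub⟩
    constructor
    · rcases le_total 1 c with h1 | h1
      · have h1c : 0 < 1/c := by positivity
        have : (1/c : ℝ) = sSup (Ico (0:ℝ) (1/c)) := (csSup_Ico h1c).symm
        have hle : sSup (Ico (0:ℝ) (1/c)) ≤ sSup (S c) :=
          csSup_le_csSup hbdd ⟨0, le_rfl, h1c⟩ (hlo1 c h1)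
        calc min (1/c) 1 ≤ 1/c := min_le_left _ _
          _ = sSup (Ico (0:ℝ) (1/c)) := this
          _ ≤ sSup (S c) := hle
      · have : (1:ℝ) = sSup (Ico (0:ℝ) 1) := (csSup_Ico one_pos).symm
        have hle : sSup (Ico (0:ℝ) 1) ≤ sSup (S c) :=
          csSup_le_csSup hbdd ⟨0, le_rfl, one_pos⟩ (hlo2 c hc h1)
        calc min (1/c) 1 ≤ 1 := min_le_right _ _
          _ = sSup (Ico (0:ℝ) 1) := this
          _ ≤ sSup (S c) := hle
    · exact csSup_le ⟨0, hzero c⟩ hub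
  -- value at 1
  have hset1 : {s : ℝ | 0 ≤ s ∧ Integrable (fun ω => Real.exp (s * h (X ω))) μ} = S 1 := by
    simp [hS]
  have hval : sSup (S 1) = 1 := by
    have := key 1 one_pos
    simp only [one_div, inv_one, min_self, max_self] at this
    exact le_antisymm this.2 this.1
  refine ⟨?_, by rw [hset1, hval]⟩
  -- continuity
  have hf1 : (fun c : ℝ => sSup (S c)) 1 = 1 := hval
  have hev : ∀ᶠ c : ℝ in nhds 1, 0 < c := eventually_gt_nhds one_pos
  have hmin : Tendsto (fun c : ℝ => min (1/c) 1) (nhds 1) (nhds 1) := by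
    have hc : ContinuousAt (fun c : ℝ => min (1/c) 1) 1 :=
      ((continuousAt_const.div continuousAt_id one_ne_zero).min continuousAt_const)
    simpa using hc.tendsto
  have hmax : Tendsto (fun c : ℝ => max (1/c) 1) (nhds 1) (nhds 1) := by
    have hc : ContinuousAt (fun c : ℝ => max (1/c) 1) 1 :=
      ((continuousAt_const.div continuousAt_id one_ne_zero).max continuousAt_const)
    simpa using hc.tendsto
  have hsq : Tendsto (fun c : ℝ => sSup (S c)) (nhds 1) (nhds 1) :=
    tendsto_of_tendsto_of_tendsto_of_le_of_le' hmin hmax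
      (hev.mono fun c hc => (key c hc).1) (hev.mono fun c hc => (key c hc).2)
  show Tendsto (fun c : ℝ => sSup (S c)) (nhds 1) (nhds ((fun c : ℝ => sSup (S c)) 1))
  rw [hf1]
  exact hsq
end

section
/- Let (X_i) be IID with E[X⁺] < ∞ and N a positive-integer-valued random variable independent of (X_i). For 0 < s ≤ 1, E[((S_N)⁺)^s] ≤ (E[X⁺])^s · E[N^s], where S_N = X_1 + ⋯ + X_N. -/
open MeasureTheory ProbabilityTheory Real Filter

open scoped ENNReal

/-!
Conditioning on `N = n`, independence turns `E[((S_N)⁺)^s]` into `∑ P(N = n) E[((S_n)⁺)^s]`.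
Since `(S_n)⁺ ≤ ∑_{k<n} X_k⁺`, Jensen's inequality for the concave map `t ↦ t^s` bounds each
`E[((S_n)⁺)^s]` by `(E[∑_{k<n} X_k⁺])^s = n^s (E[X⁺])^s`, and summing over `n` gives
`E[N^s] (E[X⁺])^s`.
-/

theorem ENNReal.ofReal_sum_le_sum_ofReal {ι : Type*} (t : Finset ι) (f : ι → ℝ) :
    ENNReal.ofReal (∑ i ∈ t, f i) ≤ ∑ i ∈ t, ENNReal.ofReal (f i) :=
  Finset.le_sum_of_subadditive _ ENNReal.ofReal_zero.le (fun _ _ => ENNReal.ofReal_add_le) _ _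

theorem lintegral_rpow_le_rpow_lintegral {Ω : Type*} [MeasurableSpace Ω] {μ : Measure Ω}
    [IsProbabilityMeasure μ] {f : Ω → ℝ≥0∞} (hf : AEMeasurable f μ) {s : ℝ} (hs0 : 0 ≤ s)
    (hs1 : s ≤ 1) :
    ∫⁻ ω, f ω ^ s ∂μ ≤ (∫⁻ ω, f ω ∂μ) ^ s := by
  -- Hölder with exponents `s` and `1 - s`, against the constant function `1`.
  simpa using ENNReal.lintegral_mul_norm_pow_le (μ := μ) (g := fun _ => 1) hf aemeasurable_const
    hs0 (sub_nonneg.2 hs1) (add_sub_cancel s 1)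

theorem lintegral_comp_eq_tsum_measure_preimage {Ω ι : Type*} [MeasurableSpace Ω]
    {μ : Measure Ω} [MeasurableSpace ι] [Countable ι] [MeasurableSingletonClass ι]
    {N : Ω → ι} (hN : AEMeasurable N μ) (f : ι → ℝ≥0∞) :
    ∫⁻ ω, f (N ω) ∂μ = ∑' n, μ (N ⁻¹' {n}) * f n := by
  rw [← lintegral_map' (measurable_of_countable f).aemeasurable hN, lintegral_countable']
  simp_rw [Measure.map_apply_of_aemeasurable hN (measurableSet_singleton _), mul_comm]

theorem lintegral_comp_indepFun_eq_tsum {Ω β ι : Type*} [MeasurableSpace Ω] {μ : Measure Ω}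
    [IsFiniteMeasure μ] [MeasurableSpace β] [MeasurableSpace ι] [Countable ι]
    [MeasurableSingletonClass ι] {V : Ω → β} {N : Ω → ι} (hV : AEMeasurable V μ)
    (hN : AEMeasurable N μ) (hVN : IndepFun V N μ) {G : ι → β → ℝ≥0∞}
    (hG : ∀ n, Measurable (G n)) :
    ∫⁻ ω, G (N ω) (V ω) ∂μ = ∑' n, μ (N ⁻¹' {n}) * ∫⁻ ω, G n (V ω) ∂μ := by
  have hG' : Measurable fun p : β × ι => G p.2 p.1 := measurable_from_prod_countable_left hG
  calc ∫⁻ ω, G (N ω) (V ω) ∂μ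
      = ∫⁻ p, G p.2 p.1 ∂((μ.map V).prod (μ.map N)) := by
        rw [← hVN.map_prod_eq_prod_map_map hV hN, lintegral_map' hG'.aemeasurable (hV.prodMk hN)]
    _ = ∫⁻ n, ∫⁻ x, G n x ∂(μ.map V) ∂(μ.map N) := lintegral_prod_symm' _ hG'
    _ = ∑' n, μ (N ⁻¹' {n}) * ∫⁻ ω, G n (V ω) ∂μ := by
        rw [lintegral_map' (measurable_of_countable _).aemeasurable hN,
          lintegral_comp_eq_tsum_measure_preimage hN fun n => ∫⁻ x, G n x ∂(μ.map V)]
        simp_rw [lintegral_map' (hG _).aemeasurable hV]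

theorem lintegral_rpow_sum_le_of_identDistrib {Ω : Type*} [MeasurableSpace Ω] {μ : Measure Ω}
    [IsProbabilityMeasure μ] {Y : ℕ → Ω → ℝ≥0∞} (hY : ∀ i, IdentDistrib (Y i) (Y 0) μ μ)
    {s : ℝ} (hs0 : 0 ≤ s) (hs1 : s ≤ 1) (n : ℕ) :
    ∫⁻ ω, (∑ k ∈ Finset.range n, Y k ω) ^ s ∂μ ≤ (n : ℝ≥0∞) ^ s * (∫⁻ ω, Y 0 ω ∂μ) ^ s := by
  have hmean : ∫⁻ ω, ∑ k ∈ Finset.range n, Y k ω ∂μ = n * ∫⁻ ω, Y 0 ω ∂μ := by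
    rw [lintegral_finsetSum' _ fun k _ => (hY k).aemeasurable_fst]
    simp [fun k => (hY k).lintegral_eq]
  calc ∫⁻ ω, (∑ k ∈ Finset.range n, Y k ω) ^ s ∂μ
      ≤ (∫⁻ ω, ∑ k ∈ Finset.range n, Y k ω ∂μ) ^ s :=
        lintegral_rpow_le_rpow_lintegral
          (Finset.aemeasurable_fun_sum _ fun k _ => (hY k).aemeasurable_fst) hs0 hs1
    _ = (n : ℝ≥0∞) ^ s * (∫⁻ ω, Y 0 ω ∂μ) ^ s := by
        rw [hmean, ENNReal.mul_rpow_of_nonneg _ _ hs0]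

theorem stopped_sum_moment_bound_jensen_general
    {Ω : Type*} [MeasurableSpace Ω] (μ : Measure Ω) [IsProbabilityMeasure μ]
    (X : ℕ → Ω → ℝ)
    (hXident : ∀ i, IdentDistrib (X i) (X 0) μ μ)
    (N : Ω → ℕ) (hNmeas : Measurable N)
    (hNindep : IndepFun (fun ω i => X i ω) N μ)
    (s : ℝ) (hs0 : 0 < s) (hs1 : s ≤ 1)
    (hXint : Integrable (fun ω => max (X 0 ω) 0) μ) :
    ∫⁻ ω, ENNReal.ofReal ((max (∑ k ∈ Finset.range (N ω), X k ω) 0) ^ s) ∂μ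
      ≤ ENNReal.ofReal ((∫ ω, max (X 0 ω) 0 ∂μ) ^ s)
        * ∫⁻ ω, ENNReal.ofReal ((N ω : ℝ) ^ s) ∂μ := by
  set G : ℕ → (ℕ → ℝ) → ℝ≥0∞ := fun n x => (∑ k ∈ Finset.range n, ENNReal.ofReal (x k)) ^ s
  have hG : ∀ n, Measurable (G n) := fun n =>
    (Finset.measurable_sum _ fun k _ => (measurable_pi_apply k).ennreal_ofReal).pow_const s
  have hV : AEMeasurable (fun ω i => X i ω) μ :=
    aemeasurable_pi_lambda _ fun i => (hXident i).aemeasurable_fst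
  have hmean : ENNReal.ofReal (∫ ω, max (X 0 ω) 0 ∂μ) = ∫⁻ ω, ENNReal.ofReal (X 0 ω) ∂μ := by
    rw [ofReal_integral_eq_lintegral_ofReal hXint (ae_of_all _ fun _ => le_max_right _ _)]
    simp
  calc _ ≤ ∫⁻ ω, G (N ω) (fun i => X i ω) ∂μ := lintegral_mono fun ω => by
        simpa [← ENNReal.ofReal_rpow_of_nonneg (le_max_right _ _) hs0.le] using
          ENNReal.rpow_le_rpow (ENNReal.ofReal_sum_le_sum_ofReal _ _) hs0.le
    _ = ∑' n, μ (N ⁻¹' {n}) * ∫⁻ ω, G n (fun i => X i ω) ∂μ :=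
        lintegral_comp_indepFun_eq_tsum hV hNmeas.aemeasurable hNindep hG
    _ ≤ ∑' n : ℕ, μ (N ⁻¹' {n}) * ((n : ℝ≥0∞) ^ s * (∫⁻ ω, ENNReal.ofReal (X 0 ω) ∂μ) ^ s) := by
        gcongr with n
        exact lintegral_rpow_sum_le_of_identDistrib
          (fun i => (hXident i).comp ENNReal.measurable_ofReal) hs0.le hs1 n
    _ = _ := by
        rw [← ENNReal.ofReal_rpow_of_nonneg (integral_nonneg fun ω => le_max_right (X 0 ω) 0)
          hs0.le, hmean, lintegral_comp_eq_tsum_measure_preimage hNmeas.aemeasurable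
          (fun n : ℕ => ENNReal.ofReal ((n : ℝ) ^ s)), ← ENNReal.tsum_mul_left]
        refine tsum_congr fun n => ?_
        rw [← ENNReal.ofReal_rpow_of_nonneg n.cast_nonneg hs0.le, ENNReal.ofReal_natCast]
        ring

/-- For an independently stopped random walk with IID increments, `0 < s ≤ 1`
and `E[X⁺] < ∞`, one has `E[((S_N)⁺)^s] ≤ (E[X⁺])^s · E[N^s]` (Jensen). -/
theorem stopped_sum_moment_bound_jensen
    {Ω : Type*} [MeasurableSpace Ω] (μ : Measure Ω) [IsProbabilityMeasure μ]
    (X : ℕ → Ω → ℝ) (hXmeas : ∀ i, Measurable (X i))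
    (hXindep : iIndepFun X μ)
    (hXident : ∀ i, IdentDistrib (X i) (X 0) μ μ)
    (N : Ω → ℕ) (hNmeas : Measurable N) (hNpos : ∀ ω, 1 ≤ N ω)
    (hNindep : IndepFun (fun ω i => X i ω) N μ)
    (s : ℝ) (hs0 : 0 < s) (hs1 : s ≤ 1)
    (hXint : Integrable (fun ω => max (X 0 ω) 0) μ) :
    ∫⁻ ω, ENNReal.ofReal ((max (∑ k ∈ Finset.range (N ω), X k ω) 0) ^ s) ∂μ
      ≤ ENNReal.ofReal ((∫ ω, max (X 0 ω) 0 ∂μ) ^ s)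
        * ∫⁻ ω, ENNReal.ofReal ((N ω : ℝ) ^ s) ∂μ :=
  stopped_sum_moment_bound_jensen_general μ X hXident N hNmeas hNindep s hs0 hs1 hXint
end

section
/- Let (X_i) be IID with S_n = X_1 + ⋯ + X_n and suppose there exist a > 0 and C > 0 with P(S_k > a·k) ≥ C for all k ∈ ℕ. Let N be a positive-integer-valued random variable independent of (X_i). Then for every s > 0, E[((S_N)⁺)^s] ≥ a^s · C · E[N^s]; hence the moment index of S_N is at most that of N. -/
/-!
Condition on the value of `N`. On the event `{N = k}` the stopped sum is `S_k`, and `S_k > a k`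
with probability at least `C` independently of that event, so `E[(S_N⁺)^s; N = k]` is at least
`(a k)^s · C · P(N = k)`. Summing over `k` gives `E[(S_N⁺)^s] ≥ a^s C E[N^s]`, and a positive
multiple of `E[N^s]` can only be finite if `E[N^s]` is.
-/

open MeasureTheory ProbabilityTheory Real Filter

/-- The moment index `I(Z) = sup {s ≥ 0 : E[(Z⁺)^s] < ∞}`, valued in `ℝ≥0∞`. -/
noncomputable def momentIndex {Ω : Type*} [MeasurableSpace Ω] (μ : Measure Ω)
    (Z : Ω → ℝ) : ENNReal :=
  sSup {s : ENNReal | s ≠ ⊤ ∧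
    ∫⁻ ω, ENNReal.ofReal ((max (Z ω) 0) ^ s.toReal) ∂μ < ⊤}

open scoped ENNReal

section

variable {Ω : Type*} [MeasurableSpace Ω] {μ : Measure Ω}

theorem lintegral_eq_tsum_setLIntegral_fiber {β : Type*} [Countable β] [MeasurableSpace β]
    [MeasurableSingletonClass β] {N : Ω → β} (hN : Measurable N) (f : Ω → ℝ≥0∞) :
    ∫⁻ ω, f ω ∂μ = ∑' b, ∫⁻ ω in N ⁻¹' {b}, f ω ∂μ := by
  rw [← lintegral_iUnion (fun b => hN (measurableSet_singleton b)) (pairwise_disjoint_fiber N),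
    Set.iUnion_eq_univ_iff.2 fun ω => ⟨N ω, rfl⟩, Measure.restrict_univ]

theorem ProbabilityTheory.IndepFun.mul_measure_mul_le_setLIntegral {β γ : Type*}
    [MeasurableSpace β] [MeasurableSpace γ] {Y : Ω → β} {M : Ω → γ} (hY : Measurable Y)
    (hM : Measurable M) (hind : IndepFun Y M μ) {A : Set β} {B : Set γ} (hA : MeasurableSet A)
    (hB : MeasurableSet B)
    {c : ℝ≥0∞} {f : Ω → ℝ≥0∞} (hf : ∀ ω, Y ω ∈ A → M ω ∈ B → c ≤ f ω) :
    c * (μ (Y ⁻¹' A) * μ (M ⁻¹' B)) ≤ ∫⁻ ω in M ⁻¹' B, f ω ∂μ := by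
  rw [← hind.measure_inter_preimage_eq_mul A B hA hB, ← setLIntegral_const]
  calc ∫⁻ _ in Y ⁻¹' A ∩ M ⁻¹' B, c ∂μ
      ≤ ∫⁻ ω in Y ⁻¹' A ∩ M ⁻¹' B, f ω ∂μ :=
        setLIntegral_mono' ((hY hA).inter (hM hB)) fun ω hω => hf ω hω.1 hω.2
    _ ≤ ∫⁻ ω in M ⁻¹' B, f ω ∂μ := lintegral_mono_set Set.inter_subset_right

theorem ofReal_mul_lintegral_rpow_le_lintegral_rpow_stopped {S : ℕ → Ω → ℝ}
    {N : Ω → ℕ} (hS : ∀ k, Measurable (S k)) (hN : Measurable N)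
    (hind : ∀ k, IndepFun (S k) N μ)
    {a C s : ℝ} (ha : 0 ≤ a) (hs : 0 < s)
    (hlb : ∀ k : ℕ, 1 ≤ k → ENNReal.ofReal C ≤ μ {ω | a * k < S k ω}) :
    ENNReal.ofReal (a ^ s * C) * ∫⁻ ω, ENNReal.ofReal ((N ω : ℝ) ^ s) ∂μ
      ≤ ∫⁻ ω, ENNReal.ofReal ((max (S (N ω) ω) 0) ^ s) ∂μ := by
  have hfiber : ∀ k : ℕ, ∫⁻ ω in N ⁻¹' {k}, ENNReal.ofReal ((N ω : ℝ) ^ s) ∂μ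
      = ENNReal.ofReal ((k : ℝ) ^ s) * μ (N ⁻¹' {k}) := fun k => by
    rw [← setLIntegral_const]
    exact setLIntegral_congr_fun (hN (measurableSet_singleton k)) fun ω hω => by rw [hω]
  rw [lintegral_eq_tsum_setLIntegral_fiber hN, lintegral_eq_tsum_setLIntegral_fiber hN,
    ← ENNReal.tsum_mul_left]
  refine ENNReal.tsum_le_tsum fun k => ?_
  rw [hfiber]
  rcases Nat.eq_zero_or_pos k with rfl | hk
  · simp [zero_rpow hs.ne']
  calc ENNReal.ofReal (a ^ s * C) * (ENNReal.ofReal ((k : ℝ) ^ s) * μ (N ⁻¹' {k}))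
      = ENNReal.ofReal ((a * k) ^ s) * (ENNReal.ofReal C * μ (N ⁻¹' {k})) := by
        rw [mul_rpow ha k.cast_nonneg, ENNReal.ofReal_mul (by positivity),
          ENNReal.ofReal_mul (by positivity)]
        ring
    _ ≤ ENNReal.ofReal ((a * k) ^ s) * (μ (S k ⁻¹' Set.Ioi (a * k)) * μ (N ⁻¹' {k})) := by
        gcongr
        exact hlb k hk
    _ ≤ ∫⁻ ω in N ⁻¹' {k}, ENNReal.ofReal ((max (S (N ω) ω) 0) ^ s) ∂μ := by
        refine (hind k).mul_measure_mul_le_setLIntegral (hS k) hN measurableSet_Ioi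
          (measurableSet_singleton k) fun ω hSk hNk => ?_
        rw [Set.mem_singleton_iff.1 hNk]
        gcongr
        exact le_max_of_le_left (le_of_lt hSk)

theorem momentIndex_le_of_forall_mul_lintegral_le {Z W : Ω → ℝ}
    (h : ∀ s : ℝ, 0 < s → ∃ c : ℝ≥0∞, c ≠ 0 ∧
      c * ∫⁻ ω, ENNReal.ofReal ((max (W ω) 0) ^ s) ∂μ
        ≤ ∫⁻ ω, ENNReal.ofReal ((max (Z ω) 0) ^ s) ∂μ) :
    momentIndex μ Z ≤ momentIndex μ W := by
  refine sSup_le_sSup fun s ⟨hs_ne_top, hZ_fin⟩ => ⟨hs_ne_top, ?_⟩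
  rcases (ENNReal.toReal_nonneg (a := s)).eq_or_lt with hs0 | hs_pos
  · simpa only [← hs0, rpow_zero] using hZ_fin
  obtain ⟨c, hc, hle⟩ := h s.toReal hs_pos
  exact ENNReal.lt_top_of_mul_ne_top_right (hle.trans_lt hZ_fin).ne hc

end

theorem stopped_sum_moment_index_le_stopping_general
    {Ω : Type*} [MeasurableSpace Ω] (μ : Measure Ω)
    (X : ℕ → Ω → ℝ) (hXmeas : ∀ i, Measurable (X i))
    (a C : ℝ) (ha : 0 < a) (hC : 0 < C)
    (hlb : ∀ k : ℕ, 1 ≤ k →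
      ENNReal.ofReal C ≤ μ {ω | a * k < ∑ i ∈ Finset.range k, X i ω})
    (N : Ω → ℕ) (hNmeas : Measurable N)
    (hNindep : IndepFun (fun ω i => X i ω) N μ) :
    (∀ s : ℝ, 0 < s →
      ENNReal.ofReal (a ^ s * C) * ∫⁻ ω, ENNReal.ofReal ((N ω : ℝ) ^ s) ∂μ
        ≤ ∫⁻ ω, ENNReal.ofReal ((max (∑ k ∈ Finset.range (N ω), X k ω) 0) ^ s) ∂μ)
    ∧ momentIndex μ (fun ω => ∑ k ∈ Finset.range (N ω), X k ω)
        ≤ momentIndex μ (fun ω => (N ω : ℝ)) := by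
  have hS : ∀ k, Measurable fun ω => ∑ i ∈ Finset.range k, X i ω := fun k =>
    Finset.measurable_sum _ fun i _ => hXmeas i
  have hind : ∀ k, IndepFun (fun ω => ∑ i ∈ Finset.range k, X i ω) N μ := fun k =>
    hNindep.comp (Finset.measurable_sum _ fun i _ => measurable_pi_apply i) measurable_id
  have hbound := fun s (hs : 0 < s) =>
    ofReal_mul_lintegral_rpow_le_lintegral_rpow_stopped hS hNmeas hind ha.le hs hlb
  refine ⟨hbound, momentIndex_le_of_forall_mul_lintegral_le fun s hs =>
    ⟨ENNReal.ofReal (a ^ s * C), ?_, ?_⟩⟩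
  · exact (ENNReal.ofReal_pos.2 (by positivity)).ne'
  · simpa only [max_eq_left (Nat.cast_nonneg _)] using hbound s hs

/-- If `P(S_k > a·k) ≥ C > 0` for all `k ≥ 1`, then for every `s > 0`
`E[((S_N)⁺)^s] ≥ a^s · C · E[N^s]`; hence `I(S_N) ≤ I(N)`. -/
theorem stopped_sum_moment_index_le_stopping
    {Ω : Type*} [MeasurableSpace Ω] (μ : Measure Ω) [IsProbabilityMeasure μ]
    (X : ℕ → Ω → ℝ) (hXmeas : ∀ i, Measurable (X i))
    (hXindep : iIndepFun X μ)
    (hXident : ∀ i, IdentDistrib (X i) (X 0) μ μ)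
    (a C : ℝ) (ha : 0 < a) (hC : 0 < C)
    (hlb : ∀ k : ℕ, 1 ≤ k →
      ENNReal.ofReal C ≤ μ {ω | a * k < ∑ i ∈ Finset.range k, X i ω})
    (N : Ω → ℕ) (hNmeas : Measurable N) (hNpos : ∀ ω, 1 ≤ N ω)
    (hNindep : IndepFun (fun ω i => X i ω) N μ) :
    (∀ s : ℝ, 0 < s →
      ENNReal.ofReal (a ^ s * C) * ∫⁻ ω, ENNReal.ofReal ((N ω : ℝ) ^ s) ∂μ
        ≤ ∫⁻ ω, ENNReal.ofReal ((max (∑ k ∈ Finset.range (N ω), X k ω) 0) ^ s) ∂μ)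
    ∧ momentIndex μ (fun ω => ∑ k ∈ Finset.range (N ω), X k ω)
        ≤ momentIndex μ (fun ω => (N ω : ℝ)) :=
  stopped_sum_moment_index_le_stopping_general μ X hXmeas a C ha hC hlb N hNmeas hNindep
end

section
/- Let (X_i) be IID with E[|X|] < ∞, and N independent of (X_i) with moment indices satisfying I(X) ≤ I(N). Then I(S_N) = I(X), where S_N = Σ_{k=1}^N X_k (no assumption on the sign of the drift E[X]). -/
/-!
Write `Sₙ = X₀ + ⋯ + Xₙ₋₁`. As `N` is independent of the increments,
`E[(S_N⁺)^t] = ∑ₙ P(N = n) E[(Sₙ⁺)^t]`.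

If this is finite, then `E[(Sₙ⁺)^t] < ∞` for some `n ≥ 1` with `P(N = n) > 0`. Writing
`Sₙ = X₀ + S'` with `S'` independent of `X₀`, choose `m` with `P(S' ≥ -m) > 0`; on that event
`X₀⁺ ≤ m + Sₙ⁺`, so independence gives `P(S' ≥ -m) E[(X₀⁺)^t] < ∞`. Hence `I(S_N) ≤ I(X)`.

Conversely `E[(Sₙ⁺)^t] ≤ nᵗ (1 + E[(X⁺)^t] + E[X⁺])`: for `t ≥ 1` by the power-mean inequality,
for `t ≤ 1` by `xᵗ ≤ 1 + x` applied to the mean `Sₙ⁺ / n`.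
Summing against the law of `N` bounds `E[(S_N⁺)^t]` by a multiple of `E[Nᵗ]`, which is finite
for `t < min (I(X), I(N)) = I(X)`.
-/

open MeasureTheory ProbabilityTheory Real Filter

open Finset
open scoped ENNReal

namespace ENNReal

lemma rpow_le_one_add_rpow (a : ℝ≥0∞) {r s : ℝ} (hr : 0 ≤ r) (hrs : r ≤ s) :
    a ^ r ≤ 1 + a ^ s := by
  rcases le_total a 1 with ha | ha
  · exact (rpow_le_one ha hr).trans le_self_add
  · exact (rpow_le_rpow_of_exponent_le ha hrs).trans le_add_self

lemma ofReal_sum_le {ι : Type*} (s : Finset ι) (f : ι → ℝ) :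
    ENNReal.ofReal (∑ i ∈ s, f i) ≤ ∑ i ∈ s, ENNReal.ofReal (f i) :=
  Finset.le_sum_of_subadditive _ ofReal_zero.le (fun _ _ => ofReal_add_le) s f

lemma rpow_sum_le_card_rpow_mul_one_add {ι : Type*} {s : Finset ι} (hs : s.Nonempty)
    (f : ι → ℝ≥0∞) {t : ℝ} (ht₀ : 0 ≤ t) (ht₁ : t ≤ 1) :
    (∑ i ∈ s, f i) ^ t ≤ (#s : ℝ≥0∞) ^ t * (1 + (#s : ℝ≥0∞)⁻¹ * ∑ i ∈ s, f i) := by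
  have hcard : (#s : ℝ≥0∞) ≠ 0 := by simpa using hs.ne_empty
  calc (∑ i ∈ s, f i) ^ t = ((#s : ℝ≥0∞) * ((#s : ℝ≥0∞)⁻¹ * ∑ i ∈ s, f i)) ^ t := by
        rw [← mul_assoc, ENNReal.mul_inv_cancel hcard (natCast_ne_top _), one_mul]
    _ = (#s : ℝ≥0∞) ^ t * ((#s : ℝ≥0∞)⁻¹ * ∑ i ∈ s, f i) ^ t := mul_rpow_of_nonneg _ _ ht₀
    _ ≤ (#s : ℝ≥0∞) ^ t * (1 + (#s : ℝ≥0∞)⁻¹ * ∑ i ∈ s, f i) := by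
        gcongr
        simpa using rpow_le_one_add_rpow ((#s : ℝ≥0∞)⁻¹ * ∑ i ∈ s, f i) ht₀ ht₁

end ENNReal

section Moments

variable {Ω Ω' : Type*} [MeasurableSpace Ω] [MeasurableSpace Ω'] {μ : Measure Ω}
  {ν : Measure Ω'}

/-- `E[(Z⁺)^t]`, computed in `ℝ≥0∞` where `ENNReal.ofReal z = z⁺`. -/
noncomputable def posMoment (μ : Measure Ω) (Z : Ω → ℝ) (t : ℝ) : ℝ≥0∞ :=
  ∫⁻ ω, ENNReal.ofReal (Z ω) ^ t ∂μ

lemma momentIndex_eq_sSup_posMoment (μ : Measure Ω) (Z : Ω → ℝ) :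
    momentIndex μ Z = sSup {s : ℝ≥0∞ | s ≠ ⊤ ∧ posMoment μ Z s.toReal < ⊤} := by
  have h (s : ℝ≥0∞) (ω : Ω) :
      ENNReal.ofReal (max (Z ω) 0 ^ s.toReal) = ENNReal.ofReal (Z ω) ^ s.toReal := by
    rw [← ENNReal.ofReal_rpow_of_nonneg (le_max_right _ _) ENNReal.toReal_nonneg,
      ENNReal.ofReal_max, ENNReal.ofReal_zero, max_eq_left zero_le]
  simp only [momentIndex, posMoment, h]

lemma posMoment_le_one_add_posMoment [IsProbabilityMeasure μ] (Z : Ω → ℝ) {r s : ℝ}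
    (hr : 0 ≤ r) (hrs : r ≤ s) : posMoment μ Z r ≤ 1 + posMoment μ Z s :=
  calc posMoment μ Z r ≤ ∫⁻ ω, 1 + ENNReal.ofReal (Z ω) ^ s ∂μ :=
        lintegral_mono fun ω => ENNReal.rpow_le_one_add_rpow _ hr hrs
    _ = 1 + posMoment μ Z s := by
        rw [lintegral_add_left measurable_const, lintegral_one, measure_univ, posMoment]

lemma momentIndex_le_momentIndex_of_posMoment {Z : Ω → ℝ} {W : Ω' → ℝ}
    (h : ∀ t, 0 ≤ t → posMoment μ Z t < ⊤ → posMoment ν W t < ⊤) :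
    momentIndex μ Z ≤ momentIndex ν W := by
  rw [momentIndex_eq_sSup_posMoment, momentIndex_eq_sSup_posMoment]
  exact sSup_le_sSup fun s ⟨hs, hZ⟩ => ⟨hs, h _ ENNReal.toReal_nonneg hZ⟩

lemma min_momentIndex_le_of_posMoment [IsProbabilityMeasure μ] {Z₁ Z₂ : Ω → ℝ}
    {W : Ω' → ℝ}
    (h : ∀ t, 0 ≤ t → posMoment μ Z₁ t < ⊤ → posMoment μ Z₂ t < ⊤ → posMoment ν W t < ⊤) :
    min (momentIndex μ Z₁) (momentIndex μ Z₂) ≤ momentIndex ν W := by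
  simp only [momentIndex_eq_sSup_posMoment]
  refine le_of_forall_lt fun r hr => ?_
  obtain ⟨s₁, ⟨hs₁, hZ₁⟩, hr₁⟩ := lt_sSup_iff.mp (lt_min_iff.mp hr).1
  obtain ⟨s₂, ⟨hs₂, hZ₂⟩, hr₂⟩ := lt_sSup_iff.mp (lt_min_iff.mp hr).2
  have hs : min s₁ s₂ ≠ ⊤ := (min_lt_of_left_lt hs₁.lt_top).ne
  have hmono {Z : Ω → ℝ} {s : ℝ≥0∞} (hs : s ≠ ⊤) (hle : min s₁ s₂ ≤ s)
      (hZ : posMoment μ Z s.toReal < ⊤) : posMoment μ Z (min s₁ s₂).toReal < ⊤ :=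
    (posMoment_le_one_add_posMoment Z ENNReal.toReal_nonneg
      (ENNReal.toReal_mono hs hle)).trans_lt (ENNReal.add_lt_top.mpr ⟨ENNReal.one_lt_top, hZ⟩)
  refine lt_of_lt_of_le (lt_min hr₁ hr₂) (le_sSup ⟨hs, h _ ENNReal.toReal_nonneg ?_ ?_⟩)
  · exact hmono hs₁ (min_le_left _ _) hZ₁
  · exact hmono hs₂ (min_le_right _ _) hZ₂

lemma ProbabilityTheory.IdentDistrib.posMoment_eq {Z : Ω → ℝ} {W : Ω' → ℝ}
    (h : IdentDistrib Z W μ ν) (t : ℝ) :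
    posMoment μ Z t = posMoment ν W t :=
  (h.comp (f := Z) (u := fun x => ENNReal.ofReal x ^ t) (by fun_prop)).lintegral_eq

lemma lintegral_comp_eq_tsum_preimage {N : Ω → ℕ} (hN : Measurable N) (f : ℕ → ℝ≥0∞) :
    ∫⁻ ω, f (N ω) ∂μ = ∑' n, μ (N ⁻¹' {n}) * f n := by
  rw [← lintegral_map (measurable_from_nat (f := f)) hN, lintegral_countable']
  simp_rw [Measure.map_apply hN (measurableSet_singleton _), mul_comm]

lemma lintegral_comp_eq_tsum_of_indepFun [IsFiniteMeasure μ] {α : Type*} [MeasurableSpace α]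
    {Y : Ω → α} {N : Ω → ℕ} (hY : Measurable Y) (hN : Measurable N) (hind : IndepFun Y N μ)
    (Φ : ℕ → α → ℝ≥0∞) (hΦ : ∀ n, Measurable (Φ n)) :
    ∫⁻ ω, Φ (N ω) (Y ω) ∂μ = ∑' n, μ (N ⁻¹' {n}) * ∫⁻ ω, Φ n (Y ω) ∂μ := by
  have hΦ' : Measurable fun p : ℕ × α => Φ p.1 p.2 :=
    (measurable_from_prod_countable_left (f := fun q : α × ℕ => Φ q.2 q.1) hΦ).comp
      measurable_swap
  have hmap := (indepFun_iff_map_prod_eq_prod_map_map hN.aemeasurable hY.aemeasurable).mp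
    hind.symm
  calc ∫⁻ ω, Φ (N ω) (Y ω) ∂μ
      = ∫⁻ p, Φ p.1 p.2 ∂((μ.map N).prod (μ.map Y)) := by
        rw [← hmap, lintegral_map hΦ' (hN.prodMk hY)]
    _ = ∫⁻ ω, ∫⁻ y, Φ (N ω) y ∂(μ.map Y) ∂μ := by
        rw [lintegral_prod _ hΦ'.aemeasurable, lintegral_map _ hN]
        exact measurable_from_nat
    _ = _ := by
        simp_rw [lintegral_comp_eq_tsum_preimage hN (fun n => ∫⁻ y, Φ n y ∂(μ.map Y)),
          lintegral_map (hΦ _) hY]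

lemma posMoment_lt_top_of_add_of_indepFun [IsProbabilityMeasure μ] {Y S : Ω → ℝ}
    (hY : Measurable Y) (hS : Measurable S) (hind : IndepFun S Y μ) {t : ℝ} (ht : 0 ≤ t)
    (h : posMoment μ (Y + S) t < ⊤) : posMoment μ Y t < ⊤ := by
  obtain ⟨m, hm⟩ : ∃ m : ℕ, 0 < μ {ω | -(m : ℝ) ≤ S ω} := by
    refine exists_measure_pos_of_not_measure_iUnion_null ?_
    rw [Set.iUnion_eq_univ_iff.mpr fun ω => ?_]
    · exact IsProbabilityMeasure.ne_zero μ ∘ Measure.measure_univ_eq_zero.mp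
    obtain ⟨m, hm⟩ := exists_nat_ge (-S ω)
    exact ⟨m, by simp only [Set.mem_ofPred_eq]; linarith⟩
  set B := {ω | -(m : ℝ) ≤ S ω}
  have hbound (ω : Ω) : B.indicator 1 ω * ENNReal.ofReal (Y ω) ^ t
      ≤ 2 ^ t * ((m : ℝ≥0∞) ^ t + ENNReal.ofReal (Y ω + S ω) ^ t) := by
    by_cases hω : ω ∈ B
    · rw [Set.indicator_of_mem hω, Pi.one_apply, one_mul]
      calc ENNReal.ofReal (Y ω) ^ t ≤ ((m : ℝ≥0∞) + ENNReal.ofReal (Y ω + S ω)) ^ t := by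
            gcongr
            rw [← ENNReal.ofReal_natCast]
            refine (ENNReal.ofReal_le_ofReal ?_).trans ENNReal.ofReal_add_le
            linarith [show -(m : ℝ) ≤ S ω from hω]
        _ ≤ _ := ENNReal.add_rpow_le_two_rpow_mul_rpow_add_rpow _ _ ht
    · simp [Set.indicator_of_notMem hω]
  have hfactor :
      ∫⁻ ω, B.indicator 1 ω * ENNReal.ofReal (Y ω) ^ t ∂μ = μ B * posMoment μ Y t := by
    have hB : Measurable ((Set.Ici (-(m : ℝ))).indicator (1 : ℝ → ℝ≥0∞)) :=
      measurable_one.indicator measurableSet_Ici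
    have hpow : Measurable fun x : ℝ => ENNReal.ofReal x ^ t := by fun_prop
    rw [← lintegral_indicator_one (measurableSet_le measurable_const hS), posMoment]
    exact lintegral_mul_eq_lintegral_mul_lintegral_of_indepFun (hB.comp hS) (hpow.comp hY)
      (hind.comp hB hpow)
  have hfin : μ B * posMoment μ Y t < ⊤ := by
    rw [← hfactor]
    refine (lintegral_mono hbound).trans_lt ?_
    rw [lintegral_const_mul _ (by fun_prop), lintegral_add_left measurable_const, lintegral_const,
      measure_univ, mul_one]
    exact ENNReal.mul_lt_top (ENNReal.rpow_lt_top_of_nonneg ht (by simp))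
      (ENNReal.add_lt_top.mpr ⟨ENNReal.rpow_lt_top_of_nonneg ht (by simp), h⟩)
  exact ENNReal.lt_top_of_mul_ne_top_right hfin.ne hm.ne'

section Sums

variable {ι : Type*} {X : ι → Ω → ℝ}

lemma posMoment_finset_sum_le_of_one_le (hX : ∀ i, Measurable (X i)) (s : Finset ι) {t : ℝ}
    (ht : 1 ≤ t) :
    posMoment μ (fun ω => ∑ i ∈ s, X i ω) t
      ≤ (#s : ℝ≥0∞) ^ (t - 1) * ∑ i ∈ s, posMoment μ (X i) t :=
  calc posMoment μ (fun ω => ∑ i ∈ s, X i ω) t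
      ≤ ∫⁻ ω, (#s : ℝ≥0∞) ^ (t - 1) * ∑ i ∈ s, ENNReal.ofReal (X i ω) ^ t ∂μ :=
        lintegral_mono fun ω => (ENNReal.rpow_le_rpow (ENNReal.ofReal_sum_le _ _)
          (by linarith)).trans (ENNReal.rpow_sum_le_const_mul_sum_rpow _ _ ht)
    _ = _ := by
        rw [lintegral_const_mul _ (by fun_prop), lintegral_finsetSum _ fun i _ => by fun_prop]
        rfl

lemma posMoment_finset_sum_le_of_le_one [IsProbabilityMeasure μ] (hX : ∀ i, Measurable (X i))
    {s : Finset ι} (hs : s.Nonempty) {t : ℝ} (ht₀ : 0 ≤ t) (ht₁ : t ≤ 1) :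
    posMoment μ (fun ω => ∑ i ∈ s, X i ω) t
      ≤ (#s : ℝ≥0∞) ^ t * (1 + (#s : ℝ≥0∞)⁻¹ * ∑ i ∈ s, posMoment μ (X i) 1) :=
  calc posMoment μ (fun ω => ∑ i ∈ s, X i ω) t
      ≤ ∫⁻ ω, (#s : ℝ≥0∞) ^ t * (1 + (#s : ℝ≥0∞)⁻¹ * ∑ i ∈ s, ENNReal.ofReal (X i ω)) ∂μ :=
        lintegral_mono fun ω => (ENNReal.rpow_le_rpow (ENNReal.ofReal_sum_le _ _) ht₀).trans
          (ENNReal.rpow_sum_le_card_rpow_mul_one_add hs _ ht₀ ht₁)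
    _ = _ := by
        rw [lintegral_const_mul _ (by fun_prop), lintegral_add_left measurable_const,
          lintegral_const_mul _ (by fun_prop), lintegral_finsetSum _ fun i _ => by fun_prop]
        simp [posMoment]

end Sums

lemma posMoment_sum_range_le [IsProbabilityMeasure μ] {X : ℕ → Ω → ℝ}
    (hX : ∀ k, Measurable (X k)) (hident : ∀ k, IdentDistrib (X k) (X 0) μ μ) (n : ℕ) {t : ℝ}
    (ht : 0 ≤ t) :
    posMoment μ (fun ω => ∑ k ∈ range n, X k ω) t
      ≤ (n : ℝ≥0∞) ^ t * (1 + posMoment μ (X 0) t + posMoment μ (X 0) 1) := by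
  have hsum (r : ℝ) : ∑ k ∈ range n, posMoment μ (X k) r = n * posMoment μ (X 0) r := by
    simp [((hident _).posMoment_eq r)]
  rcases Nat.eq_zero_or_pos n with rfl | hn
  · simpa [posMoment] using le_mul_of_one_le_right' (by simp [add_assoc])
  have hn₀ : (n : ℝ≥0∞) ≠ 0 := by simpa using hn.ne'
  rcases le_total 1 t with ht₁ | ht₁
  · calc posMoment μ (fun ω => ∑ k ∈ range n, X k ω) t
        ≤ (n : ℝ≥0∞) ^ (t - 1) * (n * posMoment μ (X 0) t) := by
          simpa [← hsum] using posMoment_finset_sum_le_of_one_le (μ := μ) hX (range n) ht₁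
      _ = (n : ℝ≥0∞) ^ t * posMoment μ (X 0) t := by
          have hpow := ENNReal.rpow_add (t - 1) 1 hn₀ (ENNReal.natCast_ne_top n)
          rw [sub_add_cancel, ENNReal.rpow_one] at hpow
          rw [hpow, mul_assoc]
      _ ≤ _ := by gcongr; exact le_add_self.trans le_self_add
  · calc posMoment μ (fun ω => ∑ k ∈ range n, X k ω) t
        ≤ (n : ℝ≥0∞) ^ t * (1 + (n : ℝ≥0∞)⁻¹ * (n * posMoment μ (X 0) 1)) := by
          simpa [← hsum] using posMoment_finset_sum_le_of_le_one (μ := μ) hX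
            (nonempty_range_iff.mpr hn.ne') ht ht₁
      _ = (n : ℝ≥0∞) ^ t * (1 + posMoment μ (X 0) 1) := by
          rw [ENNReal.inv_mul_cancel_left hn₀ (ENNReal.natCast_ne_top n)]
      _ ≤ _ := by gcongr; exact le_self_add

lemma posMoment_stoppedSum_eq_tsum [IsFiniteMeasure μ] {X : ℕ → Ω → ℝ}
    (hX : ∀ k, Measurable (X k)) {N : Ω → ℕ} (hN : Measurable N)
    (hind : IndepFun (fun ω k => X k ω) N μ) (t : ℝ) :
    posMoment μ (fun ω => ∑ k ∈ range (N ω), X k ω) t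
      = ∑' n, μ (N ⁻¹' {n}) * posMoment μ (fun ω => ∑ k ∈ range n, X k ω) t :=
  lintegral_comp_eq_tsum_of_indepFun (measurable_pi_lambda _ hX) hN hind
    (fun n x => ENNReal.ofReal (∑ k ∈ range n, x k) ^ t) fun _ => by fun_prop

lemma posMoment_lt_top_of_posMoment_stoppedSum_lt_top [IsProbabilityMeasure μ]
    {X : ℕ → Ω → ℝ} (hX : ∀ k, Measurable (X k)) (hXindep : iIndepFun X μ) {N : Ω → ℕ}
    (hN : Measurable N) (hN₀ : ∀ᵐ ω ∂μ, N ω ≠ 0) (hind : IndepFun (fun ω k => X k ω) N μ)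
    {t : ℝ} (ht : 0 ≤ t) (h : posMoment μ (fun ω => ∑ k ∈ range (N ω), X k ω) t < ⊤) :
    posMoment μ (X 0) t < ⊤ := by
  obtain ⟨n, hn⟩ : ∃ n, 0 < μ (N ⁻¹' {n + 1}) := by
    refine exists_measure_pos_of_not_measure_iUnion_null fun h₀ => ?_
    obtain ⟨ω, hω, hω'⟩ := (hN₀.and (measure_eq_zero_iff_ae_notMem.mp h₀)).exists
    refine hω' (Set.mem_iUnion.mpr ⟨N ω - 1, ?_⟩)
    simp only [Set.mem_preimage, Set.mem_singleton_iff]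
    omega
  have hSn : posMoment μ (fun ω => ∑ k ∈ range (n + 1), X k ω) t < ⊤ := by
    rw [posMoment_stoppedSum_eq_tsum hX hN hind] at h
    exact ENNReal.lt_top_of_mul_ne_top_right (ENNReal.le_tsum (n + 1) |>.trans_lt h).ne hn.ne'
  have hsplit : (fun ω => ∑ k ∈ range (n + 1), X k ω)
      = X 0 + ∑ k ∈ (range (n + 1)).erase 0, X k := by
    ext ω
    rw [Pi.add_apply, Finset.sum_apply, add_sum_erase _ (fun k => X k ω) (by simp)]
  rw [hsplit] at hSn
  exact posMoment_lt_top_of_add_of_indepFun (hX 0) (by fun_prop)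
    (hXindep.indepFun_finsetSum_of_notMem hX (notMem_erase 0 _)) ht hSn

lemma posMoment_stoppedSum_lt_top [IsProbabilityMeasure μ] {X : ℕ → Ω → ℝ}
    (hX : ∀ k, Measurable (X k)) (hident : ∀ k, IdentDistrib (X k) (X 0) μ μ)
    (hX₁ : posMoment μ (X 0) 1 < ⊤) {N : Ω → ℕ} (hN : Measurable N)
    (hind : IndepFun (fun ω k => X k ω) N μ) {t : ℝ} (ht : 0 ≤ t)
    (hXt : posMoment μ (X 0) t < ⊤) (hNt : posMoment μ (fun ω => (N ω : ℝ)) t < ⊤) :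
    posMoment μ (fun ω => ∑ k ∈ range (N ω), X k ω) t < ⊤ := by
  set K := 1 + posMoment μ (X 0) t + posMoment μ (X 0) 1
  have hK : K < ⊤ := by simp [K, ENNReal.add_lt_top, hXt, hX₁]
  have hNt' : posMoment μ (fun ω => (N ω : ℝ)) t = ∑' n, μ (N ⁻¹' {n}) * (n : ℝ≥0∞) ^ t := by
    simpa [posMoment] using lintegral_comp_eq_tsum_preimage hN fun n => (n : ℝ≥0∞) ^ t
  calc posMoment μ (fun ω => ∑ k ∈ range (N ω), X k ω) t
      = ∑' n, μ (N ⁻¹' {n}) * posMoment μ (fun ω => ∑ k ∈ range n, X k ω) t :=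
        posMoment_stoppedSum_eq_tsum hX hN hind t
    _ ≤ ∑' n, μ (N ⁻¹' {n}) * ((n : ℝ≥0∞) ^ t * K) :=
        ENNReal.tsum_le_tsum fun n => by gcongr; exact posMoment_sum_range_le hX hident n ht
    _ = posMoment μ (fun ω => (N ω : ℝ)) t * K := by
        simp_rw [hNt', ← ENNReal.tsum_mul_right, mul_assoc]
    _ < ⊤ := ENNReal.mul_lt_top hNt hK

end Moments

/-- If `E[|X|] < ∞` and `I(X) ≤ I(N)`, then `I(S_N) = I(X)`, with no
assumption on the sign of the drift `E[X]`. -/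
theorem stopped_sum_moment_index_eq_increment
    {Ω : Type*} [MeasurableSpace Ω] (μ : Measure Ω) [IsProbabilityMeasure μ]
    (X : ℕ → Ω → ℝ) (hXmeas : ∀ i, Measurable (X i))
    (hXindep : iIndepFun X μ)
    (hXident : ∀ i, IdentDistrib (X i) (X 0) μ μ)
    (N : Ω → ℕ) (hNmeas : Measurable N) (hNpos : ∀ ω, 1 ≤ N ω)
    (hNindep : IndepFun (fun ω i => X i ω) N μ)
    (hXint : Integrable (X 0) μ)
    (hidx : momentIndex μ (X 0) ≤ momentIndex μ (fun ω => (N ω : ℝ))) :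
    momentIndex μ (fun ω => ∑ k ∈ Finset.range (N ω), X k ω)
      = momentIndex μ (X 0) := by
  have hN₀ : ∀ᵐ ω ∂μ, N ω ≠ 0 := ae_of_all _ fun ω => Nat.one_le_iff_ne_zero.mp (hNpos ω)
  have hX₁ : posMoment μ (X 0) 1 < ⊤ := by simpa [posMoment] using hXint.lintegral_lt_top
  refine le_antisymm (momentIndex_le_momentIndex_of_posMoment fun t ht h =>
    posMoment_lt_top_of_posMoment_stoppedSum_lt_top hXmeas hXindep hNmeas hN₀ hNindep ht h) ?_
  calc momentIndex μ (X 0)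
      = min (momentIndex μ (X 0)) (momentIndex μ fun ω => (N ω : ℝ)) := (min_eq_left hidx).symm
    _ ≤ _ := min_momentIndex_le_of_posMoment fun t ht hXt hNt =>
        posMoment_stoppedSum_lt_top hXmeas hXident hX₁ hNmeas hNindep ht hXt hNt
end

section
/- Let ξ be a nonnegative random variable and h : [0,∞) → [0,∞) a nondecreasing eventually concave function with h(x) = o(x) as x → ∞ and h(x) ≥ log x for all sufficiently large x. If E[exp(h(ξ))] < ∞, then for every c > E[ξ] there exists a constant K(c) such that for all n, E[exp(h(S_n))] ≤ K(c)·exp(h(n·c)), where S_n is the sum of n IID copies of ξ. -/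
/-!
Let `T = n c` and `γ = h T - h (T - 1)`. Concavity keeps `h` below its chord through `T - 1` and
`T` up to a bounded error. If every summand is at most `T`, this gives
`h (S_n) ≤ h T + γ (S_n - T) + O(1)`; otherwise the same bound taken at the largest summand
`ξ_i > T` leaves one factor `exp (h ξ_i)`, and each other summand `x` contributes a factor
`exp (γ' x)` with `γ' ≤ γ`, dominated by `majorant h γ s x`: `exp (γ x)` below a cutoff `s` with
`γ s` fixed, a multiple of `exp (h x)` above it. Since `γ → 0` and `E exp (h ξ) < ∞`, the majorant
has mean at most `exp (γ b)` for some `b < c`. By independence the first case then costs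
`exp (h T)`, and the `n` possible positions of the big jump cost `n exp (n γ b)`, which is at most
`exp (h T) / (c - b)` because `h x ≥ log x`. For the finitely many remaining `n` only finiteness is
needed, and it follows from the subadditivity of `h` up to a constant.
-/

open MeasureTheory ProbabilityTheory Real Filter Asymptotics Topology Set
open scoped ENNReal

theorem ConcaveOn.slope_le_slope {s : Set ℝ} {f : ℝ → ℝ} (hf : ConcaveOn ℝ s f)
    {p q p' q' : ℝ} (hp : p ∈ s) (hq : q ∈ s) (hp' : p' ∈ s) (hq' : q' ∈ s)
    (hpq : p < q) (hpp' : p ≤ p') (hqq' : q ≤ q') (hpq' : p' < q') :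
    slope f p' q' ≤ slope f p q :=
  calc slope f p' q' = slope f q' p' := slope_comm f p' q'
    _ ≤ slope f q' p := hf.slope_anti hq' ⟨hp, (hpq.trans_le hqq').ne⟩ ⟨hp', hpq'.ne⟩ hpp'
    _ = slope f p q' := slope_comm f q' p
    _ ≤ slope f p q := hf.slope_anti hp ⟨hq, hpq.ne'⟩ ⟨hq', (hpq.trans_le hqq').ne'⟩ hqq'

def chordSlope (h : ℝ → ℝ) (t : ℝ) : ℝ := h t - h (t - 1)

lemma chordSlope_eq_slope (h : ℝ → ℝ) (t : ℝ) : chordSlope h t = slope h (t - 1) t := by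
  simp [chordSlope, slope_def_field]

lemma chordSlope_nonneg {h : ℝ → ℝ} (hmono : Monotone h) (t : ℝ) : 0 ≤ chordSlope h t :=
  sub_nonneg.2 (hmono (by linarith))

noncomputable def majorant (h : ℝ → ℝ) (γ s x : ℝ) : ℝ :=
  if x ≤ s then exp (γ * x) else exp (γ * (s + 1) - h s) * exp (h x)

lemma majorant_nonneg (h : ℝ → ℝ) (γ s x : ℝ) : 0 ≤ majorant h γ s x := by
  unfold majorant; split_ifs <;> positivity

lemma measurable_majorant {h : ℝ → ℝ} (hmono : Monotone h) (γ s : ℝ) :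
    Measurable (majorant h γ s) :=
  Measurable.ite measurableSet_Iic (by fun_prop)
    (measurable_const.mul (measurable_exp.comp hmono.measurable))

section ChordSlope

variable {h : ℝ → ℝ} {a : ℝ}

lemma chordSlope_le_slope (hconc : ConcaveOn ℝ (Ici a) h) {p q t : ℝ} (hp : a ≤ p)
    (hpq : p < q) (hpt : p ≤ t - 1) (hqt : q ≤ t) : chordSlope h t ≤ slope h p q := by
  rw [chordSlope_eq_slope]
  exact hconc.slope_le_slope hp (mem_Ici.2 (by linarith)) (mem_Ici.2 (by linarith))
    (mem_Ici.2 (by linarith)) hpq hpt hqt (by linarith)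

lemma slope_le_chordSlope (hconc : ConcaveOn ℝ (Ici a) h) {t x : ℝ} (ht : a + 1 ≤ t)
    (htx : t < x) : slope h t x ≤ chordSlope h t := by
  rw [chordSlope_eq_slope]
  exact hconc.slope_le_slope (mem_Ici.2 (by linarith)) (mem_Ici.2 (by linarith))
    (mem_Ici.2 (by linarith)) (mem_Ici.2 (by linarith)) (by linarith) (by linarith) htx.le htx

lemma chordSlope_antitoneOn (hconc : ConcaveOn ℝ (Ici a) h) :
    AntitoneOn (chordSlope h) (Ici (a + 1)) := fun t ht t' _ htt' => by
  rw [chordSlope_eq_slope h t]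
  exact chordSlope_le_slope hconc (by linarith [mem_Ici.1 ht]) (by linarith) (by linarith)
    (by linarith)

lemma le_add_chordSlope_mul (hmono : Monotone h) (hconc : ConcaveOn ℝ (Ici a) h) {t x : ℝ}
    (ht : a + 1 ≤ t) (hx : a ≤ x) : h x ≤ h t + chordSlope h t * (x - t + 1) := by
  have hγ := chordSlope_nonneg hmono t
  rcases le_or_gt x (t - 1) with hxt | hxt
  · have hs := chordSlope_le_slope hconc hx (by linarith) hxt le_rfl
    rw [slope_def_field, le_div_iff₀ (by linarith)] at hs
    nlinarith
  rcases le_or_gt x t with hxt' | hxt'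
  · nlinarith [hmono hxt']
  · have hs := slope_le_chordSlope hconc ht hxt'
    rw [slope_def_field, div_le_iff₀ (by linarith)] at hs
    nlinarith

lemma le_add_chordSlope_mul_of_nonneg (hmono : Monotone h) (hconc : ConcaveOn ℝ (Ici a) h)
    (ha : 0 ≤ a) {t x : ℝ} (ht : a + 1 ≤ t) (hx : 0 ≤ x) :
    h x ≤ h t + chordSlope h t * (x - t + 1 + a) := by
  have hmax := le_add_chordSlope_mul hmono hconc ht (le_max_right x a)
  have hxa : max x a ≤ x + a := max_le (by linarith) (by linarith)
  nlinarith [hmono (le_max_left x a), chordSlope_nonneg hmono t]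

lemma add_chordSlope_mul_le (hmono : Monotone h) (hconc : ConcaveOn ℝ (Ici a) h)
    {s x y : ℝ} (hs : a ≤ s) (hsx : s ≤ x) (hxy : x ≤ y) :
    h s + chordSlope h y * (x - s - 1) ≤ h x := by
  have hγ := chordSlope_nonneg hmono y
  rcases hsx.eq_or_lt with rfl | hsx
  · nlinarith
  rcases le_or_gt s (y - 1) with hsy | hsy
  · have hslope := chordSlope_le_slope hconc hs hsx hsy hxy
    rw [slope_def_field, le_div_iff₀ (by linarith)] at hslope
    nlinarith
  · nlinarith [hmono hsx.le]

lemma exp_chordSlope_mul_le_majorant (hmono : Monotone h) (hconc : ConcaveOn ℝ (Ici a) h)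
    (ha : 0 ≤ a) {γ s x y : ℝ} (hs : a ≤ s) (hx : 0 ≤ x) (hxy : x ≤ y)
    (hγ : chordSlope h y ≤ γ) : exp (chordSlope h y * x) ≤ majorant h γ s x := by
  unfold majorant
  split_ifs with hxs
  · exact exp_le_exp.2 (mul_le_mul_of_nonneg_right hγ hx)
  · rw [← exp_add]
    have := add_chordSlope_mul_le hmono hconc hs (not_le.1 hxs).le hxy
    exact exp_le_exp.2 (by nlinarith [chordSlope_nonneg hmono y])

lemma tendsto_chordSlope_atTop (hmono : Monotone h) (hconc : ConcaveOn ℝ (Ici a) h)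
    (hlittle : h =o[atTop] (fun x : ℝ => x)) : Tendsto (chordSlope h) atTop (𝓝 0) := by
  have hslope : Tendsto (fun t => slope h a t) atTop (𝓝 0) := by
    have hO : (fun t : ℝ => t) =O[atTop] (fun t => t - a) :=
      (IsEquivalent.refl.sub_isLittleO (isLittleO_const_id_atTop a)).symm.isBigO
    have := ((hlittle.sub (isLittleO_const_id_atTop (h a))).trans_isBigO hO).tendsto_div_nhds_zero
    simpa [slope_def_field] using this
  refine tendsto_of_tendsto_of_tendsto_of_le_of_le' tendsto_const_nhds hslope
    (Eventually.of_forall (chordSlope_nonneg hmono)) ?_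
  filter_upwards [eventually_ge_atTop (a + 1)] with t ht
  exact chordSlope_le_slope hconc le_rfl (by linarith) (by linarith) le_rfl

lemma exists_add_le_add_add (hmono : Monotone h) (hconc : ConcaveOn ℝ (Ici a) h) (ha : 0 ≤ a) :
    ∃ C, ∀ u v, 0 ≤ u → 0 ≤ v → h (u + v) ≤ h u + h v + C := by
  set Γ := chordSlope h (a + 1)
  have hΓ : 0 ≤ Γ := chordSlope_nonneg hmono _
  refine ⟨max (h (2 * a + 2) - 2 * h 0) (2 * Γ * (1 + a) - h 0), ?_⟩
  suffices key : ∀ u v, 0 ≤ v → v ≤ u → h (u + v) ≤ h u + h v +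
      max (h (2 * a + 2) - 2 * h 0) (2 * Γ * (1 + a) - h 0) by
    intro u v hu hv
    rcases le_total v u with hvu | huv
    · exact key u v hv hvu
    · have := key v u hu huv
      rw [add_comm v u] at this
      linarith
  intro u v hv hvu
  have hv0 := hmono hv
  rcases lt_or_ge u (a + 1) with hu | hu
  · have := hmono (show u + v ≤ 2 * a + 2 by linarith)
    linarith [hmono (hv.trans hvu), le_max_left (h (2 * a + 2) - 2 * h 0) (2 * Γ * (1 + a) - h 0)]
  have hline := le_add_chordSlope_mul_of_nonneg hmono hconc ha hu (by linarith : 0 ≤ u + v)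
  have hγu := chordSlope_nonneg hmono u
  have hγuΓ : chordSlope h u ≤ Γ := chordSlope_antitoneOn hconc self_mem_Ici hu hu
  have hC := le_max_right (h (2 * a + 2) - 2 * h 0) (2 * Γ * (1 + a) - h 0)
  suffices chordSlope h u * (v + 1 + a) ≤ h v - h 0 + 2 * Γ * (1 + a) by nlinarith
  rcases lt_or_ge v (a + 1) with hva | hva
  · nlinarith
  · have hγvu : chordSlope h u ≤ chordSlope h v := chordSlope_antitoneOn hconc hva hu hvu
    have hγvΓ : chordSlope h v ≤ Γ := chordSlope_antitoneOn hconc self_mem_Ici hva hva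
    have h0 := le_add_chordSlope_mul_of_nonneg hmono hconc ha hva le_rfl
    nlinarith [chordSlope_nonneg hmono v]

lemma mul_exp_chordSlope_mul_le (hconc : ConcaveOn ℝ (Ici a) h) {u v : ℝ} (hu : a ≤ u)
    (hu0 : 0 < u) (hlog : log u ≤ h u) (hv : 1 ≤ v) :
    u * exp (chordSlope h (u + v) * v) ≤ exp (h (u + v)) := by
  have hslope := chordSlope_le_slope hconc hu (by linarith) (by linarith) le_rfl (t := u + v)
  rw [slope_def_field, add_sub_cancel_left, le_div_iff₀ (by linarith)] at hslope
  calc u * exp (chordSlope h (u + v) * v) = exp (log u + chordSlope h (u + v) * v) := by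
        rw [exp_add, exp_log hu0]
    _ ≤ exp (h (u + v)) := exp_le_exp.2 (by linarith)

lemma exp_chordSlope_pow_terms_le (hmono : Monotone h) (hconc : ConcaveOn ℝ (Ici a) h)
    {b c E : ℝ} {n : ℕ} (hbc : b < c) (hu : a ≤ (c - b) * n) (hu0 : 0 < (c - b) * n)
    (hlog : log ((c - b) * n) ≤ h ((c - b) * n)) (hv : 1 ≤ b * n) (hE : 0 ≤ E) :
    exp (h (n * c) - chordSlope h (n * c) * (n * c)) * exp (chordSlope h (n * c) * b) ^ n +
        n * E * exp (chordSlope h (n * c) * b) ^ n ≤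
      (1 + E / (c - b)) * exp (h (n * c)) := by
  have hγ0 := chordSlope_nonneg hmono (n * c)
  have hpow : exp (chordSlope h (n * c) * b) ^ n = exp (chordSlope h (n * c) * (b * n)) := by
    rw [← exp_nat_mul]; ring_nf
  have hcentral : exp (h (n * c) - chordSlope h (n * c) * (n * c)) *
      exp (chordSlope h (n * c) * (b * n)) ≤ exp (h (n * c)) := by
    rw [← exp_add]
    exact exp_le_exp.2 (by nlinarith [(Nat.cast_nonneg n : (0 : ℝ) ≤ n)])
  have hjump := mul_exp_chordSlope_mul_le hconc hu hu0 hlog hv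
  rw [show (c - b) * n + b * n = n * c by ring] at hjump
  rw [hpow, add_mul, one_mul, div_mul_eq_mul_div]
  refine add_le_add hcentral ((le_div_iff₀ (sub_pos.2 hbc)).2 ?_)
  nlinarith [mul_le_mul_of_nonneg_left hjump hE]

lemma exp_apply_sum_le_of_forall_le (hmono : Monotone h) (hconc : ConcaveOn ℝ (Ici a) h)
    (ha : 0 ≤ a) {g : ℝ → ℝ} {T : ℝ} (hT : a + 1 ≤ T)
    (hg : ∀ x, 0 ≤ x → x ≤ T → exp (chordSlope h T * x) ≤ g x) {ι : Type*} (s : Finset ι)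
    {x : ι → ℝ} (hx0 : ∀ i, 0 ≤ x i) (hxT : ∀ i ∈ s, x i ≤ T) :
    exp (h (∑ i ∈ s, x i)) ≤
      exp (chordSlope h T * (1 + a)) * (exp (h T - chordSlope h T * T) * ∏ i ∈ s, g (x i)) := by
  have hline := le_add_chordSlope_mul_of_nonneg hmono hconc ha hT
    (Finset.sum_nonneg (s := s) fun i _ => hx0 i)
  calc exp (h (∑ i ∈ s, x i))
      ≤ exp (chordSlope h T * (1 + a) + ((h T - chordSlope h T * T) +
          ∑ i ∈ s, chordSlope h T * x i)) :=
        exp_le_exp.2 (by rw [← Finset.mul_sum]; linarith)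
    _ = exp (chordSlope h T * (1 + a)) *
          (exp (h T - chordSlope h T * T) * ∏ i ∈ s, exp (chordSlope h T * x i)) := by
        rw [exp_add, exp_add, exp_sum]
    _ ≤ _ := by
        gcongr with i hi
        exact hg _ (hx0 i) (hxT i hi)

lemma exp_apply_sum_le_of_max_ge (hmono : Monotone h) (hconc : ConcaveOn ℝ (Ici a) h)
    (ha : 0 ≤ a) {g : ℝ → ℝ} {T : ℝ} (hT : a + 1 ≤ T)
    (hg : ∀ y, T ≤ y → ∀ x, 0 ≤ x → x ≤ y → exp (chordSlope h y * x) ≤ g x) {ι : Type*}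
    [DecidableEq ι] (s : Finset ι) {x : ι → ℝ} (hx0 : ∀ i, 0 ≤ x i) {i : ι} (hi : i ∈ s)
    (hTi : T ≤ x i) (hmax : ∀ j ∈ s, x j ≤ x i) :
    exp (h (∑ j ∈ s, x j)) ≤
      exp (chordSlope h T * (1 + a)) * (exp (h (x i)) * ∏ j ∈ s.erase i, g (x j)) := by
  have hline := le_add_chordSlope_mul_of_nonneg hmono hconc ha (hT.trans hTi)
    (Finset.sum_nonneg (s := s) fun j _ => hx0 j)
  have hγ := mul_le_mul_of_nonneg_right (chordSlope_antitoneOn hconc hT (hT.trans hTi) hTi)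
    (by linarith : 0 ≤ 1 + a)
  rw [← Finset.add_sum_erase s x hi] at hline ⊢
  calc exp (h (x i + ∑ j ∈ s.erase i, x j))
      ≤ exp (chordSlope h T * (1 + a) + (h (x i) +
          ∑ j ∈ s.erase i, chordSlope h (x i) * x j)) :=
        exp_le_exp.2 (by rw [← Finset.mul_sum]; linarith)
    _ = exp (chordSlope h T * (1 + a)) *
          (exp (h (x i)) * ∏ j ∈ s.erase i, exp (chordSlope h (x i) * x j)) := by
        rw [exp_add, exp_add, exp_sum]
    _ ≤ _ := by
        gcongr with j hj
        exact hg _ hTi _ (hx0 j) (hmax j (Finset.mem_of_mem_erase hj))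

lemma exp_apply_sum_le (hmono : Monotone h) (hconc : ConcaveOn ℝ (Ici a) h) (ha : 0 ≤ a)
    {g : ℝ → ℝ} (hg0 : ∀ x, 0 ≤ g x) {T : ℝ} (hT : a + 1 ≤ T)
    (hg : ∀ y, T ≤ y → ∀ x, 0 ≤ x → x ≤ y → exp (chordSlope h y * x) ≤ g x) {ι : Type*}
    [DecidableEq ι] (s : Finset ι) {x : ι → ℝ} (hx0 : ∀ i, 0 ≤ x i) :
    exp (h (∑ i ∈ s, x i)) ≤ exp (chordSlope h T * (1 + a)) *
      (exp (h T - chordSlope h T * T) * ∏ i ∈ s, g (x i) +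
        ∑ i ∈ s, exp (h (x i)) * ∏ j ∈ s.erase i, g (x j)) := by
  have hterm : ∀ i, 0 ≤ exp (h (x i)) * ∏ j ∈ s.erase i, g (x j) := fun i =>
    mul_nonneg (exp_pos _).le (Finset.prod_nonneg fun j _ => hg0 _)
  by_cases hall : ∀ i ∈ s, x i ≤ T
  · refine (exp_apply_sum_le_of_forall_le hmono hconc ha hT (hg T le_rfl) s hx0 hall).trans ?_
    gcongr
    exact le_add_of_nonneg_right (Finset.sum_nonneg fun i _ => hterm i)
  · push Not at hall
    obtain ⟨i₁, hi₁, hTi₁⟩ := hall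
    obtain ⟨i, hi, hmax⟩ := s.exists_max_image x ⟨i₁, hi₁⟩
    refine (exp_apply_sum_le_of_max_ge hmono hconc ha hT hg s hx0 hi
      (hTi₁.trans_le (hmax i₁ hi₁)).le hmax).trans ?_
    gcongr
    exact le_add_of_nonneg_of_le (mul_nonneg (exp_pos _).le (Finset.prod_nonneg fun j _ => hg0 _))
      (Finset.single_le_sum (fun j _ => hterm j) hi)

end ChordSlope

lemma exp_le_one_add_mul_exp {z w : ℝ} (hz : 0 ≤ z) (hzw : z ≤ w) : exp z ≤ 1 + z * exp w := by
  have h1 : exp z * exp (-z) = 1 := by rw [← exp_add, add_neg_cancel, exp_zero]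
  nlinarith [add_one_le_exp (-z), exp_pos z, exp_le_exp.2 hzw]

section Majorant

variable {Ω : Type*} [MeasurableSpace Ω] {μ : Measure Ω} {X : Ω → ℝ}

lemma tendsto_setLIntegral_lt_atTop [IsFiniteMeasure μ] (hX : Measurable X) {f : Ω → ℝ≥0∞}
    (hf : ∫⁻ ω, f ω ∂μ ≠ ∞) :
    Tendsto (fun t => ∫⁻ ω in {ω | t < X ω}, f ω ∂μ) atTop (𝓝 0) := by
  refine tendsto_setLIntegral_zero hf ?_
  have hempty : ⋂ t : ℝ, {ω | t < X ω} = ∅ :=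
    iInter_eq_empty_iff.2 fun ω => ⟨X ω, by simp⟩
  simpa [hempty] using tendsto_measure_iInter_atTop
    (fun t => (measurableSet_lt measurable_const hX).nullMeasurableSet)
    (fun t t' htt' ω (hω : t' < X ω) => htt'.trans_lt hω) ⟨0, measure_ne_top μ _⟩

lemma lintegral_majorant_le [IsProbabilityMeasure μ] {h : ℝ → ℝ} (hmono : Monotone h)
    (hX : Measurable X) (hX0 : ∀ ω, 0 ≤ X ω) (hXint : Integrable X μ) {γ s : ℝ} (hγ0 : 0 ≤ γ)
    (hγ1 : γ ≤ 1) (hs0 : 0 < s) (hlogs : log s ≤ h s) :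
    ∫⁻ ω, ENNReal.ofReal (majorant h γ s (X ω)) ∂μ ≤
      ENNReal.ofReal (1 + γ * exp (γ * s) * ∫ ω, X ω ∂μ) + ENNReal.ofReal (exp (γ * s + 1) / s) *
        ∫⁻ ω in {ω | s < X ω}, ENNReal.ofReal (exp (h (X ω))) ∂μ := by
  have hhm : Measurable h := hmono.measurable
  have hpt : ∀ ω, ENNReal.ofReal (majorant h γ s (X ω)) ≤
      ENNReal.ofReal (1 + γ * exp (γ * s) * X ω) + ENNReal.ofReal (exp (γ * s + 1) / s) *
        {ω | s < X ω}.indicator (fun ω => ENNReal.ofReal (exp (h (X ω)))) ω := by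
    intro ω
    unfold majorant
    split_ifs with hxs
    · refine le_add_right (ENNReal.ofReal_le_ofReal ?_)
      linarith [exp_le_one_add_mul_exp (mul_nonneg hγ0 (hX0 ω))
        (mul_le_mul_of_nonneg_left hxs hγ0)]
    · rw [indicator_of_mem (show ω ∈ {ω | s < X ω} from not_le.1 hxs),
        ← ENNReal.ofReal_mul (by positivity)]
      refine le_add_left (ENNReal.ofReal_le_ofReal
        (mul_le_mul_of_nonneg_right ?_ (exp_pos _).le))
      calc exp (γ * (s + 1) - h s) ≤ exp (γ * s + 1 - log s) := exp_le_exp.2 (by nlinarith)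
        _ = exp (γ * s + 1) / s := by rw [exp_sub, exp_log hs0]
  have hint : Integrable (fun ω => 1 + γ * exp (γ * s) * X ω) μ :=
    (integrable_const 1).add (hXint.const_mul _)
  refine (lintegral_mono hpt).trans_eq ?_
  rw [lintegral_add_left (by fun_prop), lintegral_const_mul _ ((by fun_prop : Measurable
      fun ω => ENNReal.ofReal (exp (h (X ω)))).indicator (measurableSet_lt measurable_const hX)),
    lintegral_indicator (measurableSet_lt measurable_const hX),
    ← ofReal_integral_eq_lintegral_ofReal hint (Eventually.of_forall fun ω =>
      add_nonneg zero_le_one (mul_nonneg (by positivity) (hX0 ω))),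
    integral_add (integrable_const 1) (hXint.const_mul _), integral_const_mul]
  simp

lemma eventually_lintegral_majorant_le [IsProbabilityMeasure μ] {h : ℝ → ℝ} (hmono : Monotone h)
    (hlog : ∀ᶠ x in atTop, log x ≤ h x) (hX : Measurable X) (hX0 : ∀ ω, 0 ≤ X ω)
    (hXint : Integrable X μ) (hexp : Integrable (fun ω => exp (h (X ω))) μ) (a : ℝ) {c : ℝ}
    (hc : ∫ ω, X ω ∂μ < c) :
    ∀ᶠ γ in 𝓝[>] 0, ∃ s, a ≤ s ∧
      ∫⁻ ω, ENNReal.ofReal (majorant h γ s (X ω)) ∂μ ≤ ENNReal.ofReal (exp (γ * c)) := by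
  set m := ∫ ω, X ω ∂μ
  have hm0 : 0 ≤ m := integral_nonneg hX0
  -- `s = L / γ`: the mean of the part below `s` is then at most `1 + γ exp L m`.
  obtain ⟨L, hLm, hL0⟩ : ∃ L, exp L * m < c ∧ 0 < L := by
    have hcont : Continuous fun L => exp L * m := by fun_prop
    have hlim : Tendsto (fun L => exp L * m) (𝓝[>] 0) (𝓝 m) := by
      simpa using (hcont.tendsto 0).mono_left nhdsWithin_le_nhds
    exact ((hlim.eventually (gt_mem_nhds hc)).and self_mem_nhdsWithin).exists
  set δ := c - exp L * m
  have hδ : 0 < δ := sub_pos.2 hLm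
  have hlarge : ∀ᶠ t in atTop, a ≤ t ∧ 0 < t ∧ log t ≤ h t ∧
      ∫⁻ ω in {ω | t < X ω}, ENNReal.ofReal (exp (h (X ω))) ∂μ <
        ENNReal.ofReal (δ * L / exp (L + 1)) := by
    have htail := tendsto_setLIntegral_lt_atTop (μ := μ) hX hexp.lintegral_lt_top.ne
    filter_upwards [eventually_ge_atTop a, eventually_gt_atTop 0, hlog,
      htail.eventually (gt_mem_nhds (ENNReal.ofReal_pos.2
        (div_pos (mul_pos hδ hL0) (exp_pos (L + 1)))))] with t h1 h2 h3 h4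
    exact ⟨h1, h2, h3, h4⟩
  have hs : Tendsto (fun γ => L / γ) (𝓝[>] 0) atTop := by
    simpa [div_eq_mul_inv] using tendsto_inv_nhdsGT_zero.const_mul_atTop hL0
  filter_upwards [hs.eventually hlarge, Ioo_mem_nhdsGT one_pos]
    with γ ⟨has, hs0, hlogs, htail⟩ ⟨hγ0, hγ1⟩
  refine ⟨L / γ, has, ?_⟩
  have hγs : γ * (L / γ) = L := mul_div_cancel₀ L hγ0.ne'
  have htail_coef : exp (L + 1) / (L / γ) * (δ * L / exp (L + 1)) = γ * δ := by
    field_simp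
  calc _ ≤ _ := lintegral_majorant_le hmono hX hX0 hXint hγ0.le hγ1.le hs0 hlogs
    _ ≤ ENNReal.ofReal (1 + γ * exp L * m) +
          ENNReal.ofReal (exp (L + 1) / (L / γ)) * ENNReal.ofReal (δ * L / exp (L + 1)) := by
        rw [hγs]
        gcongr
    _ = ENNReal.ofReal (1 + γ * c) := by
        rw [← ENNReal.ofReal_mul (by positivity), htail_coef,
          ← ENNReal.ofReal_add (by positivity) (by positivity)]
        congr 1
        simp only [δ]
        ring
    _ ≤ ENNReal.ofReal (exp (γ * c)) :=
        ENNReal.ofReal_le_ofReal (by linarith [add_one_le_exp (γ * c)])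

end Majorant

lemma exists_forall_le_of_eventually_le {F : ℕ → ℝ≥0∞} {g : ℕ → ℝ} (hF : ∀ n, F n ≠ ∞)
    (hg : ∀ n, 0 < g n) {K : ℝ} (hK : ∀ᶠ n in atTop, F n ≤ ENNReal.ofReal (K * g n)) :
    ∃ K', ∀ n, F n ≤ ENNReal.ofReal (K' * g n) := by
  obtain ⟨N, hN⟩ := eventually_atTop.1 hK
  have hsum : 0 ≤ ∑ k ∈ Finset.range N, (F k).toReal / g k :=
    Finset.sum_nonneg fun k _ => div_nonneg ENNReal.toReal_nonneg (hg k).le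
  refine ⟨max K 0 + ∑ k ∈ Finset.range N, (F k).toReal / g k, fun n => ?_⟩
  rcases lt_or_ge n N with hn | hn
  · rw [← ENNReal.ofReal_toReal (hF n)]
    refine ENNReal.ofReal_le_ofReal ?_
    have hle := Finset.single_le_sum (f := fun k => (F k).toReal / g k)
      (fun k _ => div_nonneg ENNReal.toReal_nonneg (hg k).le) (Finset.mem_range.2 hn)
    rw [div_le_iff₀ (hg n)] at hle
    nlinarith [le_max_right K 0, hg n]
  · exact (hN n hn).trans (ENNReal.ofReal_le_ofReal (mul_le_mul_of_nonneg_right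
      (by linarith [le_max_left K 0]) (hg n).le))

section IID

variable {Ω : Type*} [MeasurableSpace Ω] {μ : Measure Ω} {ξ : ℕ → Ω → ℝ} {h : ℝ → ℝ} {a : ℝ}

lemma lintegral_prod_comp_eq_prod (hmeas : ∀ i, Measurable (ξ i)) (hindep : iIndepFun ξ μ)
    (hident : ∀ i, IdentDistrib (ξ i) (ξ 0) μ μ) {G : ℕ → ℝ → ℝ≥0∞}
    (hG : ∀ i, Measurable (G i)) (s : Finset ℕ) :
    ∫⁻ ω, ∏ i ∈ s, G i (ξ i ω) ∂μ = ∏ i ∈ s, ∫⁻ ω, G i (ξ 0 ω) ∂μ := by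
  rw [lintegral_prod_eq_prod_lintegral_of_indepFun s (fun i ω => G i (ξ i ω))
    (hindep.comp G hG) (fun i => (hG i).comp (hmeas i))]
  exact Finset.prod_congr rfl fun i _ => ((hident i).comp (hG i)).lintegral_eq

lemma lintegral_prod_comp_eq_pow (hmeas : ∀ i, Measurable (ξ i)) (hindep : iIndepFun ξ μ)
    (hident : ∀ i, IdentDistrib (ξ i) (ξ 0) μ μ) {G : ℝ → ℝ≥0∞} (hG : Measurable G)
    (s : Finset ℕ) : ∫⁻ ω, ∏ i ∈ s, G (ξ i ω) ∂μ = (∫⁻ ω, G (ξ 0 ω) ∂μ) ^ s.card := by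
  rw [lintegral_prod_comp_eq_prod hmeas hindep hident (G := fun _ => G) (fun _ => hG),
    Finset.prod_const]

lemma lintegral_mul_prod_erase_comp (hmeas : ∀ i, Measurable (ξ i)) (hindep : iIndepFun ξ μ)
    (hident : ∀ i, IdentDistrib (ξ i) (ξ 0) μ μ) {F G : ℝ → ℝ≥0∞} (hF : Measurable F)
    (hG : Measurable G) {s : Finset ℕ} {i : ℕ} (hi : i ∈ s) :
    ∫⁻ ω, F (ξ i ω) * ∏ j ∈ s.erase i, G (ξ j ω) ∂μ =
      (∫⁻ ω, F (ξ 0 ω) ∂μ) * (∫⁻ ω, G (ξ 0 ω) ∂μ) ^ (s.card - 1) := by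
  set G' := Function.update (fun _ => G) i F
  have hG' : ∀ j ∈ s.erase i, G' j = G := fun j hj =>
    Function.update_of_ne (Finset.ne_of_mem_erase hj) _ _
  calc ∫⁻ ω, F (ξ i ω) * ∏ j ∈ s.erase i, G (ξ j ω) ∂μ = ∫⁻ ω, ∏ j ∈ s, G' j (ξ j ω) ∂μ := by
        refine lintegral_congr fun ω => ?_
        rw [← Finset.mul_prod_erase s (fun j => G' j (ξ j ω)) hi]
        congr 1
        · simp [G']
        · exact Finset.prod_congr rfl fun j hj => by rw [hG' j hj]
    _ = ∏ j ∈ s, ∫⁻ ω, G' j (ξ 0 ω) ∂μ := lintegral_prod_comp_eq_prod hmeas hindep hident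
        (fun j => by rcases eq_or_ne j i with rfl | hj <;> simp [G', *]) s
    _ = _ := by
        rw [← Finset.mul_prod_erase s (fun j => ∫⁻ ω, G' j (ξ 0 ω) ∂μ) hi,
          Finset.prod_congr rfl (g := fun _ => ∫⁻ ω, G (ξ 0 ω) ∂μ) fun j hj => by rw [hG' j hj],
          Finset.prod_const, Finset.card_erase_of_mem hi]
        simp [G']

lemma lintegral_exp_apply_sum_le (hmeas : ∀ i, Measurable (ξ i)) (hindep : iIndepFun ξ μ)
    (hident : ∀ i, IdentDistrib (ξ i) (ξ 0) μ μ) (hnonneg : ∀ i ω, 0 ≤ ξ i ω)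
    (hmono : Monotone h) (hconc : ConcaveOn ℝ (Ici a) h) (ha : 0 ≤ a) {g : ℝ → ℝ}
    (hgm : Measurable g) (hg0 : ∀ x, 0 ≤ g x) {T : ℝ} (hT : a + 1 ≤ T)
    (hg : ∀ y, T ≤ y → ∀ x, 0 ≤ x → x ≤ y → exp (chordSlope h y * x) ≤ g x) (n : ℕ) :
    ∫⁻ ω, ENNReal.ofReal (exp (h (∑ i ∈ Finset.range n, ξ i ω))) ∂μ ≤
      ENNReal.ofReal (exp (chordSlope h T * (1 + a))) *
        (ENNReal.ofReal (exp (h T - chordSlope h T * T)) *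
            (∫⁻ ω, ENNReal.ofReal (g (ξ 0 ω)) ∂μ) ^ n +
          n * (∫⁻ ω, ENNReal.ofReal (exp (h (ξ 0 ω))) ∂μ) *
            (∫⁻ ω, ENNReal.ofReal (g (ξ 0 ω)) ∂μ) ^ (n - 1)) := by
  have hhm : Measurable h := hmono.measurable
  have hpt : ∀ ω, ENNReal.ofReal (exp (h (∑ i ∈ Finset.range n, ξ i ω))) ≤
      ENNReal.ofReal (exp (chordSlope h T * (1 + a))) *
        (ENNReal.ofReal (exp (h T - chordSlope h T * T)) *
            ∏ i ∈ Finset.range n, ENNReal.ofReal (g (ξ i ω)) +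
          ∑ i ∈ Finset.range n, ENNReal.ofReal (exp (h (ξ i ω))) *
            ∏ j ∈ (Finset.range n).erase i, ENNReal.ofReal (g (ξ j ω))) := by
    intro ω
    have hprod : ∀ s : Finset ℕ, 0 ≤ ∏ j ∈ s, g (ξ j ω) := fun s =>
      Finset.prod_nonneg fun j _ => hg0 _
    refine (ENNReal.ofReal_le_ofReal (exp_apply_sum_le hmono hconc ha hg0 hT hg _
      (fun i => hnonneg i ω))).trans_eq ?_
    rw [ENNReal.ofReal_mul (exp_pos _).le, ENNReal.ofReal_add
      (mul_nonneg (exp_pos _).le (hprod _))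
      (Finset.sum_nonneg fun i _ => mul_nonneg (exp_pos _).le (hprod _)),
      ENNReal.ofReal_mul (exp_pos _).le, ENNReal.ofReal_prod_of_nonneg fun i _ => hg0 _,
      ENNReal.ofReal_sum_of_nonneg fun i _ => mul_nonneg (exp_pos _).le (hprod _)]
    congr 3 with i
    rw [ENNReal.ofReal_mul (exp_pos _).le, ENNReal.ofReal_prod_of_nonneg fun j _ => hg0 _]
  refine (lintegral_mono hpt).trans_eq ?_
  rw [lintegral_const_mul _ (by fun_prop), lintegral_add_left (by fun_prop),
    lintegral_const_mul _ (by fun_prop), lintegral_finsetSum _ (fun i _ => by fun_prop),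
    lintegral_prod_comp_eq_pow hmeas hindep hident (G := fun x => ENNReal.ofReal (g x))
      (by fun_prop),
    Finset.sum_congr rfl fun i hi => lintegral_mul_prod_erase_comp hmeas hindep hident
      (F := fun x => ENNReal.ofReal (exp (h x))) (G := fun x => ENNReal.ofReal (g x))
      (by fun_prop) (by fun_prop) hi]
  simp [mul_assoc]

lemma lintegral_exp_apply_sum_le_of_majorant (hmeas : ∀ i, Measurable (ξ i))
    (hindep : iIndepFun ξ μ) (hident : ∀ i, IdentDistrib (ξ i) (ξ 0) μ μ)
    (hnonneg : ∀ i ω, 0 ≤ ξ i ω) (hexp : Integrable (fun ω => exp (h (ξ 0 ω))) μ)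
    (hmono : Monotone h) (hconc : ConcaveOn ℝ (Ici a) h) (ha : 0 ≤ a) {b c s : ℝ} {n : ℕ}
    (hbc : b < c) (hT : a + 1 ≤ n * c) (hs : a ≤ s)
    (hM : ∫⁻ ω, ENNReal.ofReal (majorant h (chordSlope h (n * c)) s (ξ 0 ω)) ∂μ ≤
      ENNReal.ofReal (exp (chordSlope h (n * c) * b)))
    (hu : a ≤ (c - b) * n) (hu0 : 0 < (c - b) * n) (hlog : log ((c - b) * n) ≤ h ((c - b) * n))
    (hv : 1 ≤ b * n) :
    ∫⁻ ω, ENNReal.ofReal (exp (h (∑ i ∈ Finset.range n, ξ i ω))) ∂μ ≤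
      ENNReal.ofReal (exp (chordSlope h (a + 1) * (1 + a)) *
        (1 + (∫ ω, exp (h (ξ 0 ω)) ∂μ) / (c - b)) * exp (h (n * c))) := by
  set T := (n : ℝ) * c
  set γ := chordSlope h T
  have hγ0 : 0 ≤ γ := chordSlope_nonneg hmono T
  have hb : 0 < b := by
    by_contra! hb
    nlinarith [(Nat.cast_nonneg n : (0 : ℝ) ≤ n)]
  have hE : ∫⁻ ω, ENNReal.ofReal (exp (h (ξ 0 ω))) ∂μ =
      ENNReal.ofReal (∫ ω, exp (h (ξ 0 ω)) ∂μ) :=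
    (ofReal_integral_eq_lintegral_ofReal hexp (Eventually.of_forall fun ω => (exp_pos _).le)).symm
  have hq1 : 1 ≤ ENNReal.ofReal (exp (γ * b)) :=
    ENNReal.one_le_ofReal.2 (one_le_exp (mul_nonneg hγ0 hb.le))
  have hγΓ : γ ≤ chordSlope h (a + 1) := chordSlope_antitoneOn hconc self_mem_Ici hT hT
  refine (lintegral_exp_apply_sum_le hmeas hindep hident hnonneg hmono hconc ha
    (measurable_majorant hmono γ s) (majorant_nonneg h γ s) hT (fun y hy x hx hxy =>
      exp_chordSlope_mul_le_majorant hmono hconc ha hs hx hxy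
        (chordSlope_antitoneOn hconc hT (hT.trans hy) hy)) n).trans ?_
  rw [hE]
  calc _ ≤ ENNReal.ofReal (exp (chordSlope h (a + 1) * (1 + a))) *
        (ENNReal.ofReal (exp (h T - γ * T)) * ENNReal.ofReal (exp (γ * b)) ^ n +
          n * ENNReal.ofReal (∫ ω, exp (h (ξ 0 ω)) ∂μ) * ENNReal.ofReal (exp (γ * b)) ^ n) := by
        gcongr
        exact Nat.sub_le n 1
    _ = ENNReal.ofReal (exp (chordSlope h (a + 1) * (1 + a)) *
          (exp (h T - γ * T) * exp (γ * b) ^ n +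
            n * (∫ ω, exp (h (ξ 0 ω)) ∂μ) * exp (γ * b) ^ n)) := by
        rw [ENNReal.ofReal_mul (by positivity), ENNReal.ofReal_add (by positivity) (by positivity),
          ENNReal.ofReal_mul (by positivity), ENNReal.ofReal_mul (by positivity),
          ENNReal.ofReal_mul (by positivity), ENNReal.ofReal_pow (exp_pos _).le,
          ENNReal.ofReal_natCast]
    _ ≤ _ := by
        refine ENNReal.ofReal_le_ofReal ((mul_le_mul_of_nonneg_left
          (exp_chordSlope_pow_terms_le hmono hconc hbc hu hu0 hlog hv
            (integral_nonneg fun ω => (exp_pos _).le)) (exp_pos _).le).trans_eq ?_)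
        ring

lemma lintegral_exp_apply_sum_ne_top (hmeas : ∀ i, Measurable (ξ i)) (hindep : iIndepFun ξ μ)
    (hident : ∀ i, IdentDistrib (ξ i) (ξ 0) μ μ) (hnonneg : ∀ i ω, 0 ≤ ξ i ω)
    (hexp : Integrable (fun ω => exp (h (ξ 0 ω))) μ) (hmono : Monotone h) {C : ℝ}
    (hsub : ∀ u v, 0 ≤ u → 0 ≤ v → h (u + v) ≤ h u + h v + C) (n : ℕ) :
    ∫⁻ ω, ENNReal.ofReal (exp (h (∑ i ∈ Finset.range n, ξ i ω))) ∂μ ≠ ∞ := by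
  have hbound : ∀ ω k, h (∑ i ∈ Finset.range k, ξ i ω) ≤
      h 0 + k * C + ∑ i ∈ Finset.range k, h (ξ i ω) := by
    intro ω k
    induction k with
    | zero => simp
    | succ k ih =>
      have := hsub _ _ (Finset.sum_nonneg (s := Finset.range k) fun i _ => hnonneg i ω)
        (hnonneg k ω)
      rw [Finset.sum_range_succ, Finset.sum_range_succ]
      push_cast
      linarith
  have hhm : Measurable h := hmono.measurable
  refine ne_top_of_le_ne_top ?_ (lintegral_mono fun ω =>
    ENNReal.ofReal_le_ofReal (exp_le_exp.2 (hbound ω n)))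
  rw [lintegral_congr fun ω => by rw [exp_add, exp_sum, ENNReal.ofReal_mul (exp_pos _).le,
    ENNReal.ofReal_prod_of_nonneg fun i _ => (exp_pos _).le], lintegral_const_mul _ (by fun_prop),
    lintegral_prod_comp_eq_pow hmeas hindep hident (G := fun x => ENNReal.ofReal (exp (h x)))
      (by fun_prop)]
  exact ENNReal.mul_ne_top ENNReal.ofReal_ne_top (ENNReal.pow_ne_top hexp.lintegral_lt_top.ne)

lemma eventually_lintegral_exp_apply_sum_le [IsProbabilityMeasure μ] (hmeas : ∀ i, Measurable (ξ i))
    (hindep : iIndepFun ξ μ) (hident : ∀ i, IdentDistrib (ξ i) (ξ 0) μ μ)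
    (hnonneg : ∀ i ω, 0 ≤ ξ i ω) (hint : Integrable (ξ 0) μ)
    (hexp : Integrable (fun ω => exp (h (ξ 0 ω))) μ) (hmono : Monotone h)
    (hconc : ConcaveOn ℝ (Ici a) h) (ha : 0 ≤ a) (hlittle : h =o[atTop] (fun x : ℝ => x))
    (hlog : ∀ᶠ x : ℝ in atTop, log x ≤ h x) {c : ℝ} (hc : ∫ ω, ξ 0 ω ∂μ < c) :
    ∃ K, ∀ᶠ n : ℕ in atTop,
      ∫⁻ ω, ENNReal.ofReal (exp (h (∑ i ∈ Finset.range n, ξ i ω))) ∂μ ≤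
        ENNReal.ofReal (K * exp (h (n * c))) := by
  obtain ⟨b, hmb, hbc⟩ := exists_between hc
  have hb : 0 < b := lt_of_le_of_lt (integral_nonneg (hnonneg 0)) hmb
  obtain ⟨γ₀, hγ₀, hmaj⟩ := mem_nhdsGT_iff_exists_Ioo_subset.1
    (eventually_lintegral_majorant_le hmono hlog (hmeas 0) (hnonneg 0) hint hexp a hmb)
  set K := exp (chordSlope h (a + 1) * (1 + a)) * (1 + (∫ ω, exp (h (ξ 0 ω)) ∂μ) / (c - b))
  have hK : 1 ≤ K := one_le_mul_of_one_le_of_one_le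
      (one_le_exp (mul_nonneg (chordSlope_nonneg hmono _) (by linarith)))
      (le_add_of_nonneg_right (div_nonneg (integral_nonneg fun ω => (exp_pos _).le)
        (sub_pos.2 hbc).le))
  refine ⟨K, ?_⟩
  have hn : Tendsto (fun n : ℕ => (n : ℝ)) atTop atTop := tendsto_natCast_atTop_atTop
  have hT : Tendsto (fun n : ℕ => n * c) atTop atTop := hn.atTop_mul_const (hb.trans hbc)
  have hu : Tendsto (fun n : ℕ => (c - b) * n) atTop atTop := hn.const_mul_atTop (sub_pos.2 hbc)
  filter_upwards [hT.eventually_ge_atTop (a + 1),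
    ((tendsto_chordSlope_atTop hmono hconc hlittle).comp hT).eventually (gt_mem_nhds hγ₀),
    hu.eventually_ge_atTop a, hu.eventually_gt_atTop 0, hu.eventually hlog,
    (hn.const_mul_atTop hb).eventually_ge_atTop 1] with n hTa hγ hua hu0 hlogu hbn
  rcases (chordSlope_nonneg hmono (n * c)).eq_or_lt with hγ0 | hγ0
  · have hle : ∀ ω, h (∑ i ∈ Finset.range n, ξ i ω) ≤ h (n * c) := fun ω => by
      simpa [← hγ0] using le_add_chordSlope_mul_of_nonneg hmono hconc ha hTa
        (Finset.sum_nonneg fun i _ => hnonneg i ω)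
    calc _ ≤ ∫⁻ _, ENNReal.ofReal (exp (h (n * c))) ∂μ :=
          lintegral_mono fun ω => ENNReal.ofReal_le_ofReal (exp_le_exp.2 (hle ω))
      _ ≤ _ := by
          rw [lintegral_const, measure_univ, mul_one]
          exact ENNReal.ofReal_le_ofReal (le_mul_of_one_le_left (exp_pos _).le hK)
  · obtain ⟨s, hs, hM⟩ := hmaj ⟨hγ0, hγ⟩
    exact lintegral_exp_apply_sum_le_of_majorant hmeas hindep hident hnonneg hexp hmono hconc ha
      hbc hTa hs hM hua hu0 hlogu hbn

end IID

/-- Lemma 3 of Denisov et al.: if `ξ ≥ 0`, `h` is nondecreasing, eventually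
concave, `h(x) = o(x)`, `h(x) ≥ log x` eventually and `E[exp (h ξ)] < ∞`,
then for any `c > E[ξ]` there is `K(c)` with
`E[exp (h S_n)] ≤ K(c) · exp (h (n c))` for all `n`. -/
theorem denisov_exp_scale_bound
    {Ω : Type*} [MeasurableSpace Ω] (μ : Measure Ω) [IsProbabilityMeasure μ]
    (ξ : ℕ → Ω → ℝ) (hmeas : ∀ i, Measurable (ξ i))
    (hindep : iIndepFun ξ μ)
    (hident : ∀ i, IdentDistrib (ξ i) (ξ 0) μ μ)
    (hnonneg : ∀ i ω, 0 ≤ ξ i ω)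
    (hint : Integrable (ξ 0) μ)
    (h : ℝ → ℝ) (hmono : Monotone h)
    (hconc : ∃ x₀ : ℝ, ConcaveOn ℝ (Set.Ici x₀) h)
    (hlittle : h =o[atTop] (fun x : ℝ => x))
    (hlog : ∀ᶠ x : ℝ in atTop, Real.log x ≤ h x)
    (hexp : Integrable (fun ω => Real.exp (h (ξ 0 ω))) μ) :
    ∀ c : ℝ, (∫ ω, ξ 0 ω ∂μ) < c →
      ∃ K : ℝ, ∀ n : ℕ,
        ∫⁻ ω, ENNReal.ofReal (Real.exp (h (∑ i ∈ Finset.range n, ξ i ω))) ∂μ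
          ≤ ENNReal.ofReal (K * Real.exp (h (n * c))) := by
  intro c hc
  obtain ⟨x₀, hconc⟩ := hconc
  have ha : 0 ≤ max x₀ 0 := le_max_right x₀ 0
  have hconc' : ConcaveOn ℝ (Ici (max x₀ 0)) h :=
    hconc.subset (Ici_subset_Ici.2 (le_max_left x₀ 0)) (convex_Ici _)
  obtain ⟨C, hsub⟩ := exists_add_le_add_add hmono hconc' ha
  obtain ⟨K, hK⟩ := eventually_lintegral_exp_apply_sum_le hmeas hindep hident hnonneg hint hexp
    hmono hconc' ha hlittle hlog hc
  exact exists_forall_le_of_eventually_le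
    (fun n => lintegral_exp_apply_sum_ne_top hmeas hindep hident hnonneg hexp hmono hsub n)
    (fun n => exp_pos _) hK
end

section
/- Let (X_i) be IID with 0 < E[X] < ∞, N independent of (X_i), and h : [0,∞) → [0,∞) increasing. Fix 0 < c < E[X]. By the strong law of large numbers there is C > 0 with P(S_k > c·k) ≥ C for all k ∈ ℕ. Consequently, for any s > 0, E[exp(s·h(S_N⁺))] ≥ C·E[exp(s·h(c·N))]; in particular if E[exp(s·h(c·N))] = ∞ then E[exp(s·h(S_N⁺))] = ∞. -/
open MeasureTheory ProbabilityTheory Real Filter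
open scoped Topology ENNReal

/-! By the strong law of large numbers `P(S_k > c k) → 1`, and each of these probabilities is
positive because `E[S_k] = k E[X] > c k`; hence they are bounded below by some `C > 0`.
Splitting according to the value of `N` and using its independence from the walk,
`E[φ(S_N⁺)] ≥ ∑ₙ φ(c n) P(S_n⁺ ≥ c n) P(N = n) ≥ C E[φ(c N)]` for the increasing
`φ = exp (s h ·)`. -/

theorem exists_gt_forall_le_of_tendsto {α : Type*} [LinearOrder α] [DenselyOrdered α]
    [TopologicalSpace α] [OrderTopology α] {u : ℕ → α} {a l : α} (hu : ∀ n, a < u n)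
    (hl : a < l) (h : Tendsto u atTop (𝓝 l)) : ∃ C, a < C ∧ ∀ n, C ≤ u n := by
  obtain ⟨b, hab, hbl⟩ := exists_between hl
  obtain ⟨K, hK⟩ := eventually_atTop.mp (h.eventually (eventually_ge_nhds hbl))
  obtain ⟨m, -, hm⟩ := (Finset.range (K + 1)).exists_min_image u ⟨0, by simp⟩
  refine ⟨min b (u m), lt_min hab (hu m), fun n => ?_⟩
  rcases le_or_gt K n with hn | hn
  · exact min_le_of_left_le (hK n hn)
  · exact min_le_of_right_le (hm n (Finset.mem_range.mpr (by omega)))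

theorem lintegral_eq_tsum_setLIntegral_preimage {Ω ι : Type*} [MeasurableSpace Ω] [Countable ι]
    [MeasurableSpace ι] [MeasurableSingletonClass ι] {μ : Measure Ω} {N : Ω → ι}
    (hN : Measurable N) (f : Ω → ℝ≥0∞) :
    ∫⁻ ω, f ω ∂μ = ∑' i, ∫⁻ ω in N ⁻¹' {i}, f ω ∂μ := by
  rw [← lintegral_iUnion (fun i => hN (measurableSet_singleton i))
    (fun i j hij => (Set.disjoint_singleton.mpr hij).preimage N), ← Set.preimage_iUnion,
    Set.iUnion_of_singleton, Set.preimage_univ, setLIntegral_univ]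

theorem mul_lintegral_le_lintegral_of_indepFun {Ω : Type*} [MeasurableSpace Ω] {μ : Measure Ω}
    {Y : ℕ → Ω → ℝ} {N : Ω → ℕ} (hY : ∀ n, Measurable (Y n)) (hN : Measurable N)
    (hindep : IndepFun (fun ω n => Y n ω) N μ) {a : ℕ → ℝ} {C : ℝ≥0∞}
    (hC : ∀ n, C ≤ μ {ω | a n ≤ Y n ω}) {φ : ℝ → ℝ≥0∞} (hφ : Monotone φ) :
    C * ∫⁻ ω, φ (a (N ω)) ∂μ ≤ ∫⁻ ω, φ (Y (N ω) ω) ∂μ := by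
  rw [lintegral_eq_tsum_setLIntegral_preimage hN, lintegral_eq_tsum_setLIntegral_preimage hN,
    ← ENNReal.tsum_mul_left]
  refine ENNReal.tsum_le_tsum fun n => ?_
  have hNn : MeasurableSet (N ⁻¹' {n}) := hN (measurableSet_singleton n)
  have hindep_n : μ ({ω | a n ≤ Y n ω} ∩ N ⁻¹' {n}) = μ {ω | a n ≤ Y n ω} * μ (N ⁻¹' {n}) :=
    hindep.measure_inter_preimage_eq_mul {z | a n ≤ z n} {n}
      (measurableSet_le measurable_const (measurable_pi_apply n)) (measurableSet_singleton n)
  calc C * ∫⁻ ω in N ⁻¹' {n}, φ (a (N ω)) ∂μ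
      = C * (φ (a n) * μ (N ⁻¹' {n})) := by
        rw [setLIntegral_congr_fun hNn (fun ω (hω : N ω = n) => by rw [hω]), setLIntegral_const]
    _ ≤ φ (a n) * μ ({ω | a n ≤ Y n ω} ∩ N ⁻¹' {n}) := by
        rw [hindep_n, mul_left_comm]
        gcongr
        exact hC n
    _ = ∫⁻ ω in {ω | a n ≤ Y n ω} ∩ N ⁻¹' {n}, φ (a n) ∂μ := (setLIntegral_const _ _).symm
    _ ≤ ∫⁻ ω in {ω | a n ≤ Y n ω} ∩ N ⁻¹' {n}, φ (Y (N ω) ω) ∂μ :=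
        setLIntegral_mono' ((measurableSet_le measurable_const (hY n)).inter hNn)
          fun ω ⟨hle, (hω : N ω = n)⟩ => by rw [hω]; exact hφ hle
    _ ≤ ∫⁻ ω in N ⁻¹' {n}, φ (Y (N ω) ω) ∂μ := lintegral_mono_set Set.inter_subset_right

section RandomWalk

variable {Ω : Type*} [MeasurableSpace Ω] {μ : Measure Ω} [IsProbabilityMeasure μ]
  {X : ℕ → Ω → ℝ} {c : ℝ}

theorem tendsto_measure_mul_lt_sum (hX : ∀ i, Measurable (X i)) (hint : Integrable (X 0) μ)
    (hindep : Pairwise fun i j => IndepFun (X i) (X j) μ)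
    (hident : ∀ i, IdentDistrib (X i) (X 0) μ μ) (hc : c < ∫ ω, X 0 ω ∂μ) :
    Tendsto (fun k : ℕ => μ {ω | c * k < ∑ i ∈ Finset.range k, X i ω}) atTop (𝓝 1) := by
  rw [← measure_univ (μ := μ)]
  refine tendsto_measure_of_ae_tendsto_indicator_of_isFiniteMeasure atTop MeasurableSet.univ
    (fun k => measurableSet_lt measurable_const (Finset.measurable_sum _ fun i _ => hX i)) ?_
  filter_upwards [strong_law_ae_real X hint hindep hident] with ω hω
  filter_upwards [hω.eventually (eventually_gt_nhds hc), eventually_gt_atTop (0 : ℕ)] with k hk hk0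
  simpa using (lt_div_iff₀ (by positivity)).mp hk

theorem measure_mul_lt_sum_pos (hint : Integrable (X 0) μ)
    (hident : ∀ i, IdentDistrib (X i) (X 0) μ μ) (hc : c < ∫ ω, X 0 ω ∂μ) {k : ℕ} (hk : k ≠ 0) :
    0 < μ {ω | c * k < ∑ i ∈ Finset.range k, X i ω} := by
  have hXint : ∀ i, Integrable (X i) μ := fun i => (hident i).integrable_iff.mpr hint
  have hmean : ∫ ω, ∑ i ∈ Finset.range k, X i ω ∂μ = k * ∫ ω, X 0 ω ∂μ := by
    simp [integral_finsetSum _ fun i _ => hXint i, fun i => (hident i).integral_eq]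
  have hSint := integrable_finsetSum (Finset.range k) fun i _ => hXint i
  refine (measure_integral_le_pos hSint).trans_le (measure_mono fun ω hω => ?_)
  have hk0 : (0 : ℝ) < k := by positivity
  simp only [Set.mem_ofPred_eq, hmean] at hω ⊢
  nlinarith

theorem exists_pos_forall_le_measure_mul_lt_sum (hX : ∀ i, Measurable (X i))
    (hint : Integrable (X 0) μ) (hindep : Pairwise fun i j => IndepFun (X i) (X j) μ)
    (hident : ∀ i, IdentDistrib (X i) (X 0) μ μ) (hc : c < ∫ ω, X 0 ω ∂μ) :
    ∃ C : ℝ, 0 < C ∧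
      ∀ k : ℕ, 1 ≤ k → ENNReal.ofReal C ≤ μ {ω | c * k < ∑ i ∈ Finset.range k, X i ω} := by
  obtain ⟨C, hC, hCle⟩ := exists_gt_forall_le_of_tendsto
    (u := fun k => μ.real {ω | c * (k + 1 : ℕ) < ∑ i ∈ Finset.range (k + 1), X i ω})
    (fun k => ENNReal.toReal_pos (measure_mul_lt_sum_pos hint hident hc k.succ_ne_zero).ne'
      (measure_ne_top _ _)) one_pos
    ((ENNReal.tendsto_toReal ENNReal.one_ne_top).comp
      ((tendsto_measure_mul_lt_sum hX hint hindep hident hc).comp (tendsto_add_atTop_nat 1)))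
  refine ⟨C, hC, fun k hk => ?_⟩
  obtain ⟨j, rfl⟩ := Nat.exists_eq_add_of_le' hk
  exact (ENNReal.ofReal_le_ofReal (hCle j)).trans_eq ofReal_measureReal

end RandomWalk

theorem stopped_sum_exp_scale_lower_bound_general
    {Ω : Type*} [MeasurableSpace Ω] (μ : Measure Ω) [IsProbabilityMeasure μ]
    (X : ℕ → Ω → ℝ) (hXmeas : ∀ i, Measurable (X i))
    (hXindep : iIndepFun X μ)
    (hXident : ∀ i, IdentDistrib (X i) (X 0) μ μ)
    (hXint : Integrable (X 0) μ)
    (N : Ω → ℕ) (hNmeas : Measurable N)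
    (hNindep : IndepFun (fun ω i => X i ω) N μ)
    (h : ℝ → ℝ) (hmono : Monotone h)
    (c : ℝ) (hc : c < ∫ ω, X 0 ω ∂μ) :
    ∃ C : ℝ, 0 < C ∧
      (∀ k : ℕ, 1 ≤ k →
        ENNReal.ofReal C ≤ μ {ω | c * k < ∑ i ∈ Finset.range k, X i ω}) ∧
      ∀ s : ℝ, 0 < s →
        ENNReal.ofReal C *
            ∫⁻ ω, ENNReal.ofReal (Real.exp (s * h (c * N ω))) ∂μ
          ≤ ∫⁻ ω, ENNReal.ofReal
              (Real.exp (s * h (max (∑ k ∈ Finset.range (N ω), X k ω) 0))) ∂μ := by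
  obtain ⟨C, hC, hCle⟩ := exists_pos_forall_le_measure_mul_lt_sum hXmeas hXint
    (fun i j hij => hXindep.indepFun hij) hXident hc
  refine ⟨C, hC, hCle, fun s hs => ?_⟩
  have hsum : ∀ n, Measurable fun v : ℕ → ℝ => max (∑ i ∈ Finset.range n, v i) 0 :=
    fun n => (Finset.measurable_sum _ fun i _ => measurable_pi_apply i).max measurable_const
  refine mul_lintegral_le_lintegral_of_indepFun (a := fun n => c * n)
    (φ := fun x => ENNReal.ofReal (exp (s * h x)))
    (fun n => (hsum n).comp (measurable_pi_lambda _ hXmeas)) hNmeas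
    (hNindep.comp (measurable_pi_lambda _ hsum) measurable_id) (fun n => ?_)
    fun x y hxy => ENNReal.ofReal_le_ofReal (exp_le_exp.mpr
      (mul_le_mul_of_nonneg_left (hmono hxy) hs.le))
  rcases n with _ | n
  · simpa using (hCle 1 le_rfl).trans prob_le_one
  · exact (hCle _ n.succ_pos).trans
      (measure_mono (Set.ofPred_subset_ofPred.mpr fun ω hω => le_max_of_le_left hω.le))

/-- For an IID random walk with positive finite drift, any `c ∈ (0, E[X])`
admits `C > 0` with `P(S_k > c·k) ≥ C` for all `k ≥ 1`, and consequently
`E[exp (s h (S_N⁺))] ≥ C · E[exp (s h (c N))]` for every `s > 0`. -/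
theorem stopped_sum_exp_scale_lower_bound
    {Ω : Type*} [MeasurableSpace Ω] (μ : Measure Ω) [IsProbabilityMeasure μ]
    (X : ℕ → Ω → ℝ) (hXmeas : ∀ i, Measurable (X i))
    (hXindep : iIndepFun X μ)
    (hXident : ∀ i, IdentDistrib (X i) (X 0) μ μ)
    (hXint : Integrable (X 0) μ) (hEX : 0 < ∫ ω, X 0 ω ∂μ)
    (N : Ω → ℕ) (hNmeas : Measurable N) (hNpos : ∀ ω, 1 ≤ N ω)
    (hNindep : IndepFun (fun ω i => X i ω) N μ)
    (h : ℝ → ℝ) (hmono : Monotone h) (hnonneg : ∀ x : ℝ, 0 ≤ x → 0 ≤ h x)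
    (c : ℝ) (hc0 : 0 < c) (hc : c < ∫ ω, X 0 ω ∂μ) :
    ∃ C : ℝ, 0 < C ∧
      (∀ k : ℕ, 1 ≤ k →
        ENNReal.ofReal C ≤ μ {ω | c * k < ∑ i ∈ Finset.range k, X i ω}) ∧
      ∀ s : ℝ, 0 < s →
        ENNReal.ofReal C *
            ∫⁻ ω, ENNReal.ofReal (Real.exp (s * h (c * N ω))) ∂μ
          ≤ ∫⁻ ω, ENNReal.ofReal
              (Real.exp (s * h (max (∑ k ∈ Finset.range (N ω), X k ω) 0))) ∂μ :=
  stopped_sum_exp_scale_lower_bound_general μ X hXmeas hXindep hXident hXint N hNmeas hNindep h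
    hmono c hc
end
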